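/- arXiv:2206.12524 — 6 statements merged into one kernel-verified Lean document; each statement's English description precedes it below -/
import Mathlib

section
/- Pairwise inequivalence of the one-parameter family: let K, K̃ be real numbers with K < 1/4 and K̃ < 1/4. If there exists A ∈ GL(2,ℝ) such that h_{0,K}(A·v) = h_{0,K̃}(v) for all v ∈ ℝ², then K = K̃. -/
/-!
Common definitions: the quartic polynomial `hLK L K (x,y) = x⁴ − x²y² + L·x·y³ + K·y⁴` on ℝ²,
the Hessian determinant of a function on ℝ², and the curve `Hcurve L K = H_{L,K}`,
the connected component containing (1,0) of the hyperbolic points on the level set {h = 1}.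
-/

noncomputable section
open Matrix

/-- `h_{L,K}(x,y) = x⁴ − x²y² + L·x·y³ + K·y⁴`. -/
def hLK (L K : ℝ) (v : Fin 2 → ℝ) : ℝ :=
  v 0 ^ 4 - v 0 ^ 2 * v 1 ^ 2 + L * v 0 * v 1 ^ 3 + K * v 1 ^ 4

/-- Determinant of the Hessian matrix of `f : ℝ² → ℝ` at `p`. -/
def hessDet2 (f : (Fin 2 → ℝ) → ℝ) (p : Fin 2 → ℝ) : ℝ :=
  Matrix.det (Matrix.of fun i j : Fin 2 =>
    iteratedFDeriv ℝ 2 f p ![Pi.single i 1, Pi.single j 1])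

/-- `H_{L,K}`: the connected component containing `(1,0)` of
`{p ∈ ℝ² : h_{L,K}(p) = 1 and p is a hyperbolic point of h_{L,K}}`. -/
def Hcurve (L K : ℝ) : Set (Fin 2 → ℝ) :=
  connectedComponentIn {p | hLK L K p = 1 ∧ hessDet2 (hLK L K) p < 0} ![1, 0]

/-- **Pairwise inequivalence of the one-parameter family.**
If `h_{0,K}` and `h_{0,K̃}` with `K, K̃ < 1/4` are related by a linear transformation
`A ∈ GL(2,ℝ)`, then `K = K̃`. -/
theorem pairwise_inequivalence_family (K K' : ℝ) (hK : K < 1/4) (hK' : K' < 1/4)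
    (hequiv : ∃ A : Matrix (Fin 2) (Fin 2) ℝ, IsUnit A ∧
      ∀ v : Fin 2 → ℝ, hLK 0 K (A.mulVec v) = hLK 0 K' v) :
    K = K' := by
  obtain ⟨A, hA, hH⟩ := hequiv
  set a : ℝ := A 0 0 with ha
  set b : ℝ := A 0 1 with hb
  set c : ℝ := A 1 0 with hc
  set d : ℝ := A 1 1 with hd
  have hdet : a * d - b * c ≠ 0 := by
    have h1 : IsUnit A.det := (Matrix.isUnit_iff_isUnit_det A).mp hA
    have h2 : A.det = a * d - b * c := by rw [Matrix.det_fin_two]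
    rw [h2] at h1
    exact h1.ne_zero
  have E : ∀ x y : ℝ,
      (a*x+b*y)^4 - (a*x+b*y)^2*(c*x+d*y)^2 + K*(c*x+d*y)^4
        = x^4 - x^2*y^2 + K'*y^4 := by
    intro x y
    have h := hH ![x, y]
    simp only [hLK, Matrix.mulVec, dotProduct, Fin.sum_univ_two,
      Matrix.cons_val_zero, Matrix.cons_val_one, Matrix.head_cons] at h
    linear_combination h
  have H1 := E 1 0
  have H2 := E 0 1
  have H3 := E 1 1
  have H4 := E 1 (-1)
  have H5 := E 1 2
  -- coefficient equations
  have h0 : a^4 - a^2*c^2 + K*c^4 = 1 := by linear_combination H1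
  have h4 : b^4 - b^2*d^2 + K*d^4 = K' := by linear_combination H2
  have h2 : 6*a^2*b^2 - (a^2*d^2 + 4*a*b*c*d + b^2*c^2) + 6*K*c^2*d^2 = -1 := by
    linear_combination (1/2)*H3 + (1/2)*H4 - H1 - H2
  have h3 : 4*a*b^3 - (2*a*b*d^2 + 2*b^2*c*d) + 4*K*c*d^3 = 0 := by
    linear_combination (1/2)*H1 - 2*H2 - (1/2)*H3 - (1/6)*H4 + (1/6)*H5
  have h1 : 4*a^3*b - (2*a^2*c*d + 2*a*b*c^2) + 4*K*c^3*d = 0 := by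
    linear_combination (-1/2)*H1 + 2*H2 + H3 - (1/3)*H4 - (1/6)*H5
  -- invariants of the binary quartic
  set t : ℝ := (a * d - b * c)^2 with hts
  have ht : 0 < t := by positivity
  have idI : 12*(a^4 - a^2*c^2 + K*c^4)*(b^4 - b^2*d^2 + K*d^4)
      - 3*(4*a^3*b - (2*a^2*c*d + 2*a*b*c^2) + 4*K*c^3*d)
          *(4*a*b^3 - (2*a*b*d^2 + 2*b^2*c*d) + 4*K*c*d^3)
      + (6*a^2*b^2 - (a^2*d^2 + 4*a*b*c*d + b^2*c^2) + 6*K*c^2*d^2)^2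
      = t^2 * (12*K + 1) := by rw [hts]; ring
  have idJ : 72*(a^4 - a^2*c^2 + K*c^4)*(6*a^2*b^2 - (a^2*d^2 + 4*a*b*c*d + b^2*c^2) + 6*K*c^2*d^2)*(b^4 - b^2*d^2 + K*d^4)
      + 9*(4*a^3*b - (2*a^2*c*d + 2*a*b*c^2) + 4*K*c^3*d)
          *(6*a^2*b^2 - (a^2*d^2 + 4*a*b*c*d + b^2*c^2) + 6*K*c^2*d^2)
          *(4*a*b^3 - (2*a*b*d^2 + 2*b^2*c*d) + 4*K*c*d^3)
      - 27*(a^4 - a^2*c^2 + K*c^4)*(4*a*b^3 - (2*a*b*d^2 + 2*b^2*c*d) + 4*K*c*d^3)^2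
      - 27*(4*a^3*b - (2*a^2*c*d + 2*a*b*c^2) + 4*K*c^3*d)^2*(b^4 - b^2*d^2 + K*d^4)
      - 2*(6*a^2*b^2 - (a^2*d^2 + 4*a*b*c*d + b^2*c^2) + 6*K*c^2*d^2)^3
      = t^3 * (2 - 72*K) := by rw [hts]; ring
  rw [h0, h1, h2, h3, h4] at idI idJ
  have hI : 12*K' + 1 = t^2 * (12*K + 1) := by linear_combination idI
  have hJ : 2 - 72*K' = t^3 * (2 - 72*K) := by linear_combination idJ
  clear_value t
  clear hts idI idJ H1 H2 H3 H4 H5 h0 h1 h2 h3 h4 E hH hdet hA ha hb hc hd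
  -- final elimination
  have hfac : (1 - t) * (4*(1 + t + t^2) - 3*t^2*(12*K + 1)) = 0 := by
    linear_combination 3*hI + (1/2)*hJ
  rcases mul_eq_zero.mp hfac with h | h
  · have ht1 : t = 1 := by linarith
    rw [ht1] at hI
    linarith
  · exfalso
    have hlt : t < 1 := by nlinarith
    have hgt : 1 < t := by nlinarith
    linarith
end
end

section
/- Linear automorphism group for K ≤ 0: for every real number K ≤ 0, the set {A ∈ GL(2,ℝ) : h_{0,K}(A·v) = h_{0,K}(v) for all v ∈ ℝ²} consists of exactly the four diagonal matrices diag(ε₁, ε₂) with ε₁, ε₂ ∈ {1, −1}. In particular this group is isomorphic to ℤ₂ × ℤ₂. -/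
/-!
Common definitions: the quartic polynomial `hLK L K (x,y) = x⁴ − x²y² + L·x·y³ + K·y⁴` on ℝ²,
the Hessian determinant of a function on ℝ², and the curve `Hcurve L K = H_{L,K}`,
the connected component containing (1,0) of the hyperbolic points on the level set {h = 1}.
-/

noncomputable section
open Matrix

set_option maxHeartbeats 1600000 in
/-- **Linear automorphism group of `h_{0,K}` for `K ≤ 0`.**
The linear automorphisms of `h_{0,K}` are exactly the four diagonal matrices
`diag(ε₁, ε₂)` with `ε₁, ε₂ ∈ {1, −1}` (a group isomorphic to ℤ₂ × ℤ₂). -/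
theorem automorphism_group_K_nonpos (K : ℝ) (hK : K ≤ 0) :
    {A : Matrix (Fin 2) (Fin 2) ℝ | IsUnit A ∧
        ∀ v : Fin 2 → ℝ, hLK 0 K (A.mulVec v) = hLK 0 K v} =
      {A : Matrix (Fin 2) (Fin 2) ℝ | ∃ ε₁ ε₂ : ℝ,
        (ε₁ = 1 ∨ ε₁ = -1) ∧ (ε₂ = 1 ∨ ε₂ = -1) ∧ A = Matrix.diagonal ![ε₁, ε₂]} := by
  ext A
  simp only [Set.mem_setOf_eq]
  constructor
  · rintro ⟨hU, hA⟩
    obtain ⟨a, b, c, d, ha, hb, hc, hd⟩ :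
        ∃ a b c d : ℝ, A 0 0 = a ∧ A 0 1 = b ∧ A 1 0 = c ∧ A 1 1 = d :=
      ⟨A 0 0, A 0 1, A 1 0, A 1 1, rfl, rfl, rfl, rfl⟩
    have hdet : a * d - b * c ≠ 0 := by
      have h1 := (Matrix.isUnit_iff_isUnit_det A).mp hU
      rw [Matrix.det_fin_two, ha, hb, hc, hd] at h1
      exact isUnit_iff_ne_zero.mp h1
    have hev : ∀ x y : ℝ, (a*x + b*y)^4 - (a*x + b*y)^2*(c*x + d*y)^2
        + K*(c*x + d*y)^4 = x^4 - x^2*y^2 + K*y^4 := by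
      intro x y
      have h := hA ![x, y]
      simp only [hLK, Matrix.mulVec, dotProduct, Fin.sum_univ_two, Matrix.cons_val_zero,
        Matrix.cons_val_one, Matrix.head_cons, ha, hb, hc, hd] at h
      linear_combination h
    have E0 : a^4 - a^2*c^2 + K*c^4 = 1 := by linear_combination hev 1 0
    have E4 : b^4 - b^2*d^2 + K*d^4 = K := by linear_combination hev 0 1
    have E1 : 4*a^3*b - 2*a^2*c*d - 2*a*b*c^2 + 4*K*c^3*d = 0 := by
      linear_combination (-2 : ℝ)*hev 1 0 + (1/2 : ℝ)*hev 0 1 - (1/2 : ℝ)*hev 1 1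
        - (1/6 : ℝ)*hev 1 (-1) + (1/6 : ℝ)*hev 2 1
    have E2 : 6*a^2*b^2 - a^2*d^2 - 4*a*b*c*d - b^2*c^2 + 6*K*c^2*d^2 = -1 := by
      linear_combination (-1 : ℝ)*hev 1 0 - hev 0 1 + (1/2 : ℝ)*hev 1 1 + (1/2 : ℝ)*hev 1 (-1)
    have E3 : 4*a*b^3 - 2*b^2*c*d - 2*a*b*d^2 + 4*K*c*d^3 = 0 := by
      linear_combination (2 : ℝ)*hev 1 0 - (1/2 : ℝ)*hev 0 1 + hev 1 1
        - (1/3 : ℝ)*hev 1 (-1) - (1/6 : ℝ)*hev 2 1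
    -- final packaging lemma
    have pack : b = 0 → c = 0 → a^2 = 1 → d^2 = 1 →
        ∃ ε₁ ε₂ : ℝ, (ε₁ = 1 ∨ ε₁ = -1) ∧ (ε₂ = 1 ∨ ε₂ = -1) ∧ A = Matrix.diagonal ![ε₁, ε₂] := by
      intro hb0 hc0 ha2 hd2
      refine ⟨a, d, ?_, ?_, ?_⟩
      · rcases mul_eq_zero.mp (show (a - 1) * (a + 1) = 0 by linear_combination ha2) with h | h
        · left; linarith
        · right; linarith
      · rcases mul_eq_zero.mp (show (d - 1) * (d + 1) = 0 by linear_combination hd2) with h | h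
        · left; linarith
        · right; linarith
      · ext i j
        fin_cases i <;> fin_cases j <;>
          simp [Matrix.diagonal_apply, ha, hb, hc, hd, hb0, hc0]
    rcases hK.lt_or_eq with hKlt | hK0
    · -- K < 0
      obtain ⟨s, hs2, hs1⟩ : ∃ s : ℝ, s^2 = 1 - 4*K ∧ 1 < s := by
        refine ⟨Real.sqrt (1 - 4*K), Real.sq_sqrt (by linarith), ?_⟩
        nlinarith [Real.sqrt_nonneg (1 - 4*K),
          Real.sq_sqrt (show (0:ℝ) ≤ 1 - 4*K by linarith)]
      obtain ⟨r, hr2, hrpos⟩ : ∃ r : ℝ, r^2 = (1 + s)/2 ∧ 0 < r :=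
        ⟨Real.sqrt ((1 + s)/2), Real.sq_sqrt (by linarith), Real.sqrt_pos.mpr (by linarith)⟩
      have key : ∀ t : ℝ, (a*t + b)^4 - (a*t + b)^2*(c*t + d)^2 + K*(c*t + d)^4 = 0 →
          (a*t + b)^2 = (1 + s)/2 * (c*t + d)^2 := by
        intro t h0
        have hw : ((a*t+b)^2 - (1 + s)/2 * (c*t+d)^2) * ((a*t+b)^2 - (1 - s)/2 * (c*t+d)^2)
            = 0 := by
          linear_combination h0 - ((c*t+d)^4/4) * hs2
        have hwne : a*t+b ≠ 0 ∨ c*t+d ≠ 0 := by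
          by_contra hcon
          push_neg at hcon
          apply hdet
          have h1 : a * (c*t+d) - c * (a*t+b) = a*d - b*c := by ring
          rw [hcon.1, hcon.2] at h1
          linarith [h1]
        have hpos : 0 < (a*t+b)^2 - (1 - s)/2 * (c*t+d)^2 := by
          have hs' : (0:ℝ) ≤ (s - 1)/2 := by linarith
          have hrw : (a*t+b)^2 - (1 - s)/2 * (c*t+d)^2
              = (a*t+b)^2 + (s - 1)/2 * (c*t+d)^2 := by ring
          rw [hrw]
          rcases hwne with h | h
          · have h1 : 0 < (a*t+b)^2 := lt_of_le_of_ne (sq_nonneg _) (Ne.symm (pow_ne_zero 2 h))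
            have h2 : 0 ≤ (s - 1)/2 * (c*t+d)^2 := mul_nonneg hs' (sq_nonneg _)
            linarith
          · have h1 : 0 < (c*t+d)^2 := lt_of_le_of_ne (sq_nonneg _) (Ne.symm (pow_ne_zero 2 h))
            have h2 : 0 ≤ (s - 1)/2 * (c*t+d)^2 := mul_nonneg hs' (sq_nonneg _)
            rcases lt_or_eq_of_le hs' with h3 | h3
            · have h4 : 0 < (s - 1)/2 * (c*t+d)^2 := mul_pos h3 h1
              linarith [sq_nonneg (a*t+b)]
            · linarith
        rcases mul_eq_zero.mp hw with h1 | h1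
        · linarith
        · exfalso; linarith
      have Pr : (a*r + b)^2 = (1 + s)/2 * (c*r + d)^2 :=
        key r (by linear_combination hev r 1 + (r^2 + (1 + s)/2 - 1)*hr2 + (1/4 : ℝ)*hs2)
      have Pmr : (a*(-r) + b)^2 = (1 + s)/2 * (c*(-r) + d)^2 :=
        key (-r) (by linear_combination hev (-r) 1 + (r^2 + (1 + s)/2 - 1)*hr2 + (1/4 : ℝ)*hs2)
      have h4 : (4*r) * (a*b - (1 + s)/2*(c*d)) = 0 := by linear_combination Pr - Pmr
      have R1 : a*b - (1 + s)/2*(c*d) = 0 := by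
        rcases mul_eq_zero.mp h4 with h | h
        · linarith
        · exact h
      have R2 : (1 + s)/2*(a^2 - (1 + s)/2*c^2) + (b^2 - (1 + s)/2*d^2) = 0 := by
        linear_combination (1/2 : ℝ)*Pr + (1/2 : ℝ)*Pmr - (a^2 - (1 + s)/2*c^2)*hr2
      have hσ : a^2 - (1 + s)/2*c^2 ≠ 0 := by
        intro h0
        apply hdet
        have hb2 : b^2 - (1 + s)/2*d^2 = 0 := by linear_combination R2 - (1 + s)/2*h0
        have hsq : (a*d - b*c)^2 = 0 := by
          linear_combination d^2*h0 + c^2*hb2 - 2*c*d*R1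
        exact (pow_eq_zero_iff two_ne_zero).mp hsq
      have key2 : (2*s*(c*d)) * (a^2 - (1 + s)/2*c^2) = 0 := by
        linear_combination E1 - (4*a^2 - 2*c^2)*R1 - c^3*d*hs2
      have hcd : c*d = 0 := by
        rcases mul_eq_zero.mp key2 with h | h
        · rcases mul_eq_zero.mp h with h' | h'
          · exfalso; nlinarith
          · exact h'
        · exact absurd h hσ
      have hab : a*b = 0 := by linear_combination R1 + (1 + s)/2*hcd
      rcases mul_eq_zero.mp hcd with hc0 | hd0
      · -- c = 0
        have ha0 : a ≠ 0 := by
          intro h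
          apply hσ
          rw [h, hc0]; ring
        have hb0 : b = 0 := by
          rcases mul_eq_zero.mp hab with h | h
          · exact absurd h ha0
          · exact h
        have ha4 : a^4 = 1 := by linear_combination E0 + (a^2*c - K*c^3)*hc0
        have ha2 : a^2 = 1 := by
          rcases mul_eq_zero.mp (show (a^2 - 1)*(a^2 + 1) = 0 by linear_combination ha4) with h | h
          · linarith
          · nlinarith [sq_nonneg a]
        have hd4 : K*(d^4 - 1) = 0 := by linear_combination E4 - (b^3 - b*d^2)*hb0
        have hd4' : d^4 = 1 := by
          rcases mul_eq_zero.mp hd4 with h | h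
          · exact absurd h (ne_of_lt hKlt)
          · linarith
        have hd2 : d^2 = 1 := by
          rcases mul_eq_zero.mp (show (d^2 - 1)*(d^2 + 1) = 0 by linear_combination hd4') with h | h
          · linarith
          · nlinarith [sq_nonneg d]
        exact pack hb0 hc0 ha2 hd2
      · -- d = 0
        exfalso
        rcases mul_eq_zero.mp hab with ha0 | hb0
        · have : K*c^4 = 1 := by linear_combination E0 - (a^3 - a*c^2)*ha0
          nlinarith [sq_nonneg (c^2)]
        · apply hdet
          rw [hb0, hd0]; ring
    · -- K = 0
      subst hK0
      have ha0 : a ≠ 0 := by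
        intro h
        have h1 : a^2*(a^2 - c^2) = 1 := by linear_combination E0
        rw [h] at h1
        simp at h1
      rcases eq_or_ne b 0 with hb0 | hbne
      · have h2 : (2*a^2)*(c*d) = 0 := by
          linear_combination (-1 : ℝ)*E1 + (4*a^3 - 2*a*c^2)*hb0
        have hcd : c*d = 0 := by
          rcases mul_eq_zero.mp h2 with h | h
          · exfalso; exact ha0 (by nlinarith)
          · exact h
        have had2 : a^2*d^2 = 1 := by
          linear_combination (-1 : ℝ)*E2 + (6*a^2*b - 4*a*c*d - b*c^2)*hb0
        have hdne : d ≠ 0 := by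
          intro h
          rw [h] at had2
          simp at had2
        have hc0 : c = 0 := by
          rcases mul_eq_zero.mp hcd with h | h
          · exact h
          · exact absurd h hdne
        have ha4 : a^4 = 1 := by linear_combination E0 + a^2*c*hc0
        have ha2 : a^2 = 1 := by
          rcases mul_eq_zero.mp (show (a^2 - 1)*(a^2 + 1) = 0 by linear_combination ha4) with h | h
          · linarith
          · nlinarith [sq_nonneg a]
        have hd2 : d^2 = 1 := by linear_combination had2 - d^2*ha2
        exact pack hb0 hc0 ha2 hd2
      · exfalso
        have hbd : b^2 = d^2 := by
          have h1 : b^2*(b^2 - d^2) = 0 := by linear_combination E4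
          rcases mul_eq_zero.mp h1 with h | h
          · exact absurd ((pow_eq_zero_iff two_ne_zero).mp h) hbne
          · linarith
        have habcd : a*b - c*d = 0 := by
          have h3 : (2*b^2)*(a*b - c*d) = 0 := by linear_combination E3 - 2*a*b*hbd
          rcases mul_eq_zero.mp h3 with h | h
          · exact absurd (by nlinarith : b = 0) hbne
          · exact h
        have h5 : (2*a*b)*(a^2 - c^2) = 0 := by linear_combination E1 - 2*a^2*habcd
        have hac : a^2 - c^2 ≠ 0 := by
          intro h
          have h1 : a^2*(a^2 - c^2) = 1 := by linear_combination E0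
          rw [h] at h1
          simp at h1
        rcases mul_eq_zero.mp h5 with h | h
        · rcases mul_eq_zero.mp h with h' | h'
          · have : a = 0 := by linarith
            exact ha0 this
          · exact hbne h'
        · exact hac h
  · rintro ⟨ε₁, ε₂, h1, h2, rfl⟩
    constructor
    · rw [Matrix.isUnit_iff_isUnit_det, Matrix.det_diagonal, Fin.prod_univ_two]
      simp only [Matrix.cons_val_zero, Matrix.cons_val_one, Matrix.head_cons]
      rcases h1 with rfl | rfl <;> rcases h2 with rfl | rfl <;> norm_num
    · intro v
      simp only [hLK, Matrix.mulVec_diagonal, Matrix.cons_val_zero, Matrix.cons_val_one,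
        Matrix.head_cons]
      rcases h1 with rfl | rfl <;> rcases h2 with rfl | rfl <;> ring
end
end

section
/- Linear automorphism group for 0 < K < 1/4: for every real number K with 0 < K < 1/4, the set {A ∈ GL(2,ℝ) : h_{0,K}(A·v) = h_{0,K}(v) for all v ∈ ℝ²} consists of exactly eight matrices: the four diagonal matrices diag(ε₁, ε₂) with ε₁, ε₂ ∈ {1, −1}, and the four antidiagonal matrices whose (1,2)-entry is ε₁·K^{1/4} and whose (2,1)-entry is ε₂·K^{−1/4}, for ε₁, ε₂ ∈ {1, −1}. -/
/-!
Common definitions: the quartic polynomial `hLK L K (x,y) = x⁴ − x²y² + L·x·y³ + K·y⁴` on ℝ²,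
the Hessian determinant of a function on ℝ², and the curve `Hcurve L K = H_{L,K}`,
the connected component containing (1,0) of the hyperbolic points on the level set {h = 1}.
-/

noncomputable section
open Matrix

set_option maxHeartbeats 2000000 in
/-- **Linear automorphism group of `h_{0,K}` for `0 < K < 1/4`.**
The linear automorphisms of `h_{0,K}` are exactly the four diagonal matrices
`diag(ε₁, ε₂)` and the four antidiagonal matrices with `(1,2)`-entry `ε₁·K^{1/4}` and
`(2,1)`-entry `ε₂·K^{−1/4}`, for `ε₁, ε₂ ∈ {1, −1}`. -/
theorem automorphism_group_K_pos (K : ℝ) (hK0 : 0 < K) (hK : K < 1/4) :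
    {A : Matrix (Fin 2) (Fin 2) ℝ | IsUnit A ∧
        ∀ v : Fin 2 → ℝ, hLK 0 K (A.mulVec v) = hLK 0 K v} =
      {A : Matrix (Fin 2) (Fin 2) ℝ | ∃ ε₁ ε₂ : ℝ,
        (ε₁ = 1 ∨ ε₁ = -1) ∧ (ε₂ = 1 ∨ ε₂ = -1) ∧
        (A = Matrix.diagonal ![ε₁, ε₂] ∨
          A = !![0, ε₁ * K ^ ((1:ℝ)/4); ε₂ * K ^ (-((1:ℝ)/4)), 0])} := by
  have hKne : K ≠ 0 := ne_of_gt hK0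
  set β := K ^ ((1:ℝ)/4) with hβdef
  set γ := K ^ (-((1:ℝ)/4)) with hγdef
  have hβpos : 0 < β := Real.rpow_pos_of_pos hK0 _
  have hγpos : 0 < γ := Real.rpow_pos_of_pos hK0 _
  have hβ4 : β ^ 4 = K := by
    rw [hβdef, ← Real.rpow_natCast (K ^ ((1:ℝ)/4)) 4, ← Real.rpow_mul hK0.le]
    norm_num
  have hβγ : β * γ = 1 := by
    rw [hβdef, hγdef, ← Real.rpow_add hK0]
    norm_num
  have hγ4 : γ ^ 4 * K = 1 := by
    have h1 : γ ^ 4 * β ^ 4 = 1 := by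
      rw [← mul_pow, mul_comm γ β, hβγ]; norm_num
    rw [← hβ4]; exact h1
  ext A
  simp only [Set.mem_setOf_eq]
  constructor
  · rintro ⟨hU, hA⟩
    obtain ⟨a, b, c, d, rfl⟩ : ∃ a b c d, A = !![a, b; c, d] :=
      ⟨_, _, _, _, Matrix.eta_fin_two A⟩
    have hdet : a * d - b * c ≠ 0 := by
      have h := (Matrix.isUnit_iff_isUnit_det _).mp hU
      rw [Matrix.det_fin_two_of] at h
      exact h.ne_zero
    have key : ∀ x y : ℝ, (a*x+b*y)^4 - (a*x+b*y)^2*(c*x+d*y)^2 + K*(c*x+d*y)^4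
        = x^4 - x^2*y^2 + K*y^4 := by
      intro x y
      have h := hA ![x, y]
      simp [hLK, Matrix.mulVec, dotProduct, Fin.sum_univ_two] at h
      linear_combination h
    have E0 : a^4 - a^2*c^2 + K*c^4 = 1 := by linear_combination key 1 0
    have E4 : b^4 - b^2*d^2 + K*d^4 = K := by linear_combination key 0 1
    have E1 : 4*a^3*b - 2*a*b*c^2 - 2*a^2*c*d + 4*K*c^3*d = 0 := by
      linear_combination (-1/2)*key 1 1 + (-1/6)*key 1 (-1) + (1/6)*key 2 1 - 2*E0 + (1/2)*E4
    have E2 : 6*a^2*b^2 - b^2*c^2 - 4*a*b*c*d - a^2*d^2 + 6*K*c^2*d^2 = -1 := by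
      linear_combination (1/2)*key 1 1 + (1/2)*key 1 (-1) - E0 - E4
    have E3 : 4*a*b^3 - 2*a*b*d^2 - 2*b^2*c*d + 4*K*c*d^3 = 0 := by
      linear_combination key 1 1 + (-1/3)*key 1 (-1) + (-1/6)*key 2 1 + 2*E0 + (-1/2)*E4
    have hd4 : (a*d - b*c)^4 * (12*K + 1) = 12*K + 1 := by
      linear_combination (12*(b^4-b^2*d^2+K*d^4))*E0 + 12*E4
        - 3*(4*a*b^3-2*a*b*d^2-2*b^2*c*d+4*K*c*d^3)*E1
        + (6*a^2*b^2-b^2*c^2-4*a*b*c*d-a^2*d^2+6*K*c^2*d^2-1)*E2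
    have hd2 : (a*d - b*c)^2 = 1 := by
      have h12 : (0:ℝ) < 12*K + 1 := by linarith
      have h4 : (a*d - b*c)^4 = 1 := by
        have := mul_right_cancel₀ (ne_of_gt h12) (hd4.trans (one_mul (12*K+1)).symm)
        exact this
      have hfac : ((a*d-b*c)^2 - 1) * ((a*d-b*c)^2 + 1) = 0 := by linear_combination h4
      rcases mul_eq_zero.mp hfac with h | h
      · linarith [sub_eq_zero.mp h]
      · nlinarith [sq_nonneg (a*d - b*c)]
    have hac : a * c = 0 := by
      have h1 : (144*K - 36) * (a*c)^2 = 0 := by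
        linear_combination (24*(6*a^2*b^2-b^2*c^2-4*a*b*c*d-a^2*d^2+6*K*c^2*d^2)+24)*E0
          + 24*E2 - 9*(4*a^3*b-2*a*b*c^2-2*a^2*c*d+4*K*c^3*d)*E1
          - ((12*a^2-2*c^2)*(-2*a^2+12*K*c^2)-16*a^2*c^2)*hd2
      have h36 : (144*K - 36 : ℝ) ≠ 0 := by nlinarith
      have h2 : (a*c)^2 = 0 := (mul_eq_zero.mp h1).resolve_left h36
      exact pow_eq_zero_iff (two_ne_zero) |>.mp h2
    have hbd : b * d = 0 := by
      have h1 : (144*K - 36) * (b*d)^2 = 0 := by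
        linear_combination 24*(b^4-b^2*d^2+K*d^4)*E2
          - 9*(4*a*b^3-2*a*b*d^2-2*b^2*c*d+4*K*c*d^3)*E3
          - ((12*b^2-2*d^2)*(-2*b^2+12*K*d^2)-16*b^2*d^2)*hd2
      have h36 : (144*K - 36 : ℝ) ≠ 0 := by nlinarith
      have h2 : (b*d)^2 = 0 := (mul_eq_zero.mp h1).resolve_left h36
      exact pow_eq_zero_iff (two_ne_zero) |>.mp h2
    rcases mul_eq_zero.mp hac with ha | hc
    · -- a = 0 : antidiagonal case
      subst ha
      have hbne : b ≠ 0 := by intro h; apply hdet; rw [h]; ring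
      have hd0 : d = 0 := (mul_eq_zero.mp hbd).resolve_left hbne
      subst hd0
      have hb4 : b^4 = β^4 := by rw [hβ4]; linear_combination E4
      have hc4 : c^4 = γ^4 := by
        have hKc : K * c^4 = 1 := by linear_combination E0
        have hKγ : K * γ^4 = 1 := by linear_combination hγ4
        exact mul_left_cancel₀ hKne (hKc.trans hKγ.symm)
      have hb : b = β ∨ b = -β := by
        have hfac : (b - β) * (b + β) * (b^2 + β^2) = 0 := by linear_combination hb4
        have hpos : (0:ℝ) < b^2 + β^2 := by positivity
        rcases mul_eq_zero.mp hfac with h | h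
        · rcases mul_eq_zero.mp h with h | h
          · left; linarith [sub_eq_zero.mp h]
          · right; linarith [eq_neg_of_add_eq_zero_left h]
        · exact absurd h (ne_of_gt hpos)
      have hc : c = γ ∨ c = -γ := by
        have hfac : (c - γ) * (c + γ) * (c^2 + γ^2) = 0 := by linear_combination hc4
        have hpos : (0:ℝ) < c^2 + γ^2 := by positivity
        rcases mul_eq_zero.mp hfac with h | h
        · rcases mul_eq_zero.mp h with h | h
          · left; linarith [sub_eq_zero.mp h]
          · right; linarith [eq_neg_of_add_eq_zero_left h]
        · exact absurd h (ne_of_gt hpos)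
      rcases hb with hb | hb <;> rcases hc with hc | hc
      · exact ⟨1, 1, Or.inl rfl, Or.inl rfl, Or.inr (by rw [hb, hc]; norm_num)⟩
      · exact ⟨1, -1, Or.inl rfl, Or.inr rfl, Or.inr (by rw [hb, hc]; norm_num)⟩
      · exact ⟨-1, 1, Or.inr rfl, Or.inl rfl, Or.inr (by rw [hb, hc]; norm_num)⟩
      · exact ⟨-1, -1, Or.inr rfl, Or.inr rfl, Or.inr (by rw [hb, hc]; norm_num)⟩
    · -- c = 0 : diagonal case
      subst hc
      have hdne : d ≠ 0 := by intro h; apply hdet; rw [h]; ring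
      have hb0 : b = 0 := (mul_eq_zero.mp hbd).resolve_right hdne
      subst hb0
      have ha4 : a^4 = 1 := by linear_combination E0
      have hdd4 : d^4 = 1 := by
        have h : K * d^4 = K * 1 := by linear_combination E4
        exact mul_left_cancel₀ hKne h
      have ha : a = 1 ∨ a = -1 := by
        have hfac : (a - 1) * (a + 1) * (a^2 + 1) = 0 := by linear_combination ha4
        have hpos : (0:ℝ) < a^2 + 1 := by positivity
        rcases mul_eq_zero.mp hfac with h | h
        · rcases mul_eq_zero.mp h with h | h
          · left; linarith [sub_eq_zero.mp h]
          · right; linarith [eq_neg_of_add_eq_zero_left h]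
        · exact absurd h (ne_of_gt hpos)
      have hd : d = 1 ∨ d = -1 := by
        have hfac : (d - 1) * (d + 1) * (d^2 + 1) = 0 := by linear_combination hdd4
        have hpos : (0:ℝ) < d^2 + 1 := by positivity
        rcases mul_eq_zero.mp hfac with h | h
        · rcases mul_eq_zero.mp h with h | h
          · left; linarith [sub_eq_zero.mp h]
          · right; linarith [eq_neg_of_add_eq_zero_left h]
        · exact absurd h (ne_of_gt hpos)
      refine ⟨a, d, ha, hd, Or.inl ?_⟩
      ext i j
      fin_cases i <;> fin_cases j <;> simp [Matrix.diagonal]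
  · rintro ⟨ε₁, ε₂, hε₁, hε₂, rfl | rfl⟩
    · constructor
      · apply (Matrix.isUnit_iff_isUnit_det _).mpr
        apply isUnit_iff_ne_zero.mpr
        rw [Matrix.det_diagonal]
        rcases hε₁ with rfl | rfl <;> rcases hε₂ with rfl | rfl <;>
          simp [Fin.prod_univ_two]
      · intro v
        have hm : ∀ i, (Matrix.diagonal ![ε₁, ε₂]).mulVec v i = ![ε₁, ε₂] i * v i := by
          intro i; rw [Matrix.mulVec_diagonal]
        simp only [hLK, hm]
        rcases hε₁ with rfl | rfl <;> rcases hε₂ with rfl | rfl <;>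
          simp only [Matrix.cons_val_zero, Matrix.cons_val_one, Matrix.head_cons] <;> ring
    · constructor
      · apply (Matrix.isUnit_iff_isUnit_det _).mpr
        apply isUnit_iff_ne_zero.mpr
        rw [Matrix.det_fin_two_of]
        rcases hε₁ with rfl | rfl <;> rcases hε₂ with rfl | rfl <;>
          · intro h; rw [show (0:ℝ) = 0 from rfl] at h; nlinarith [hβγ]
      · intro v
        have h0 : (!![0, ε₁ * β; ε₂ * γ, 0]).mulVec v 0 = ε₁ * β * v 1 := by
          simp [Matrix.mulVec, dotProduct, Fin.sum_univ_two]
        have h1 : (!![0, ε₁ * β; ε₂ * γ, 0]).mulVec v 1 = ε₂ * γ * v 0 := by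
          simp [Matrix.mulVec, dotProduct, Fin.sum_univ_two]
        simp only [hLK, h0, h1]
        rcases hε₁ with rfl | rfl <;> rcases hε₂ with rfl | rfl <;>
          linear_combination (v 1)^4 * hβ4 - (v 0)^2*(v 1)^2*(β*γ+1)*hβγ + (v 0)^4 * hγ4
end
end

section
/- Homogeneity of the curve x⁴ − x²y² + (1/4)y⁴ = 1: for every t ∈ ℝ let R_t ∈ GL(2,ℝ) be the matrix with rows (cosh t, (1/√2)·sinh t) and (√2·sinh t, cosh t). Then h_{0,1/4}(R_t·v) = h_{0,1/4}(v) for all v ∈ ℝ² and all t ∈ ℝ, and the family {R_t} acts transitively on H_{0,1/4}: for all p, q ∈ H_{0,1/4} there exists t ∈ ℝ with R_t·p = q. In particular H_{0,1/4} is a homogeneous space under linear automorphisms of h_{0,1/4}. -/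
/-!
Common definitions: the quartic polynomial `hLK L K (x,y) = x⁴ − x²y² + L·x·y³ + K·y⁴` on ℝ²,
the Hessian determinant of a function on ℝ², and the curve `Hcurve L K = H_{L,K}`,
the connected component containing (1,0) of the hyperbolic points on the level set {h = 1}.
-/

noncomputable section
open Matrix

/-!
Since `x⁴ − x²y² + y⁴/4 = q²` with `q = x² − y²/2`, and the Hessian determinant of
`h_{0,1/4}` equals `−24 q²`, the hyperbolic part of `{h = 1}` is `{q = ±1}`. The matrices
`R_t` are the hyperbolic rotations of `q`: they preserve `q` and move the branch
`γ t = (cosh t, √2 sinh t)` by `R_t γ(s) = γ(t + s)`. Along the component through `(1, 0)`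
neither `q` nor `x` can change sign (intermediate value theorem), so this component is
exactly the branch `γ`, on which the `R_t` act simply transitively.
-/

def linForm2 (c₀ c₁ : ℝ) : (Fin 2 → ℝ) →L[ℝ] ℝ :=
  c₀ • ContinuousLinearMap.proj 0 + c₁ • ContinuousLinearMap.proj 1

@[simp]
lemma linForm2_apply (c₀ c₁ : ℝ) (v : Fin 2 → ℝ) :
    linForm2 c₀ c₁ v = c₀ * v 0 + c₁ * v 1 := by
  simp [linForm2]

lemma hessDet2_eq_of_hasFDerivAt {f a b : (Fin 2 → ℝ) → ℝ} {p : Fin 2 → ℝ}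
    {a₀ a₁ b₀ b₁ : ℝ}
    (hf : ∀ q, HasFDerivAt f (linForm2 (a q) (b q)) q)
    (ha : HasFDerivAt a (linForm2 a₀ a₁) p) (hb : HasFDerivAt b (linForm2 b₀ b₁) p) :
    hessDet2 f p = a₀ * b₁ - a₁ * b₀ := by
  have hgrad : HasFDerivAt (fderiv ℝ f)
      ((linForm2 a₀ a₁).smulRight (linForm2 1 0) +
        (linForm2 b₀ b₁).smulRight (linForm2 0 1)) p := by
    rw [show fderiv ℝ f = fun q => linForm2 (a q) (b q) from funext fun q => (hf q).fderiv]
    refine ((ha.smul_const (linForm2 1 0)).add (hb.smul_const (linForm2 0 1)))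
      |>.congr_of_eventuallyEq (.of_forall fun q => ?_)
    ext v
    simp
  simp [hessDet2, Matrix.det_fin_two, iteratedFDeriv_two_apply, hgrad.fderiv]
  ring

lemma hasFDerivAt_hLK (L K : ℝ) (p : Fin 2 → ℝ) :
    HasFDerivAt (hLK L K)
      (linForm2 (4 * p 0 ^ 3 - 2 * p 0 * p 1 ^ 2 + L * p 1 ^ 3)
        (-2 * p 0 ^ 2 * p 1 + 3 * L * p 0 * p 1 ^ 2 + 4 * K * p 1 ^ 3)) p := by
  have h₀ := hasFDerivAt_apply (𝕜 := ℝ) 0 p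
  have h₁ := hasFDerivAt_apply (𝕜 := ℝ) 1 p
  refine ((((h₀.pow 4).sub ((h₀.pow 2).mul (h₁.pow 2))).add
    ((h₀.const_mul L).mul (h₁.pow 3))).add ((h₁.pow 4).const_mul K)).congr_fderiv ?_
  ext v
  simp
  ring

lemma hessDet2_hLK (L K : ℝ) (p : Fin 2 → ℝ) :
    hessDet2 (hLK L K) p = (12 * p 0 ^ 2 - 2 * p 1 ^ 2) *
      (-2 * p 0 ^ 2 + 6 * L * p 0 * p 1 + 12 * K * p 1 ^ 2) -
      (-4 * p 0 * p 1 + 3 * L * p 1 ^ 2) ^ 2 := by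
  have h₀ := hasFDerivAt_apply (𝕜 := ℝ) 0 p
  have h₁ := hasFDerivAt_apply (𝕜 := ℝ) 1 p
  have ha : HasFDerivAt (fun q : Fin 2 → ℝ => 4 * q 0 ^ 3 - 2 * q 0 * q 1 ^ 2 + L * q 1 ^ 3)
      (linForm2 (12 * p 0 ^ 2 - 2 * p 1 ^ 2) (-4 * p 0 * p 1 + 3 * L * p 1 ^ 2)) p := by
    refine ((((h₀.pow 3).const_mul 4).sub ((h₀.const_mul 2).mul (h₁.pow 2))).add
      ((h₁.pow 3).const_mul L)).congr_fderiv ?_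
    ext v
    simp
    ring
  have hb : HasFDerivAt
      (fun q : Fin 2 → ℝ => -2 * q 0 ^ 2 * q 1 + 3 * L * q 0 * q 1 ^ 2 + 4 * K * q 1 ^ 3)
      (linForm2 (-4 * p 0 * p 1 + 3 * L * p 1 ^ 2)
        (-2 * p 0 ^ 2 + 6 * L * p 0 * p 1 + 12 * K * p 1 ^ 2)) p := by
    refine (((((h₀.pow 2).const_mul (-2)).mul h₁).add
      ((h₀.const_mul (3 * L)).mul (h₁.pow 2))).add
      ((h₁.pow 3).const_mul (4 * K))).congr_fderiv ?_
    ext v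
    simp
    ring
  rw [hessDet2_eq_of_hasFDerivAt (hasFDerivAt_hLK L K) ha hb]
  ring

lemma IsPreconnected.pos_of_ne_zero {X : Type*} [TopologicalSpace X] {s : Set X}
    (hs : IsPreconnected s) {f : X → ℝ} (hf : ContinuousOn f s) (hne : ∀ x ∈ s, f x ≠ 0)
    {x₀ x : X} (hx₀ : x₀ ∈ s) (hfx₀ : 0 < f x₀) (hx : x ∈ s) : 0 < f x := by
  by_contra! hfx
  obtain ⟨y, hy, hfy⟩ := hs.intermediate_value hx hx₀ hf ⟨hfx, hfx₀.le⟩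
  exact hne y hy hfy

def hypForm (a : ℝ) (v : Fin 2 → ℝ) : ℝ := v 0 ^ 2 - (v 1 / a) ^ 2

def hypRotation (a t : ℝ) : Matrix (Fin 2) (Fin 2) ℝ :=
  !![Real.cosh t, Real.sinh t / a; a * Real.sinh t, Real.cosh t]

def hypBranch (a t : ℝ) : Fin 2 → ℝ := ![Real.cosh t, a * Real.sinh t]

section Hyperbola

variable {a : ℝ}

lemma continuous_hypForm : Continuous (hypForm a) := by
  unfold hypForm; fun_prop

lemma continuous_hypBranch : Continuous (hypBranch a) :=
  continuous_pi fun i => by fin_cases i <;> simp [hypBranch] <;> fun_prop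

lemma hypBranch_zero : hypBranch a 0 = ![1, 0] := by
  ext i; fin_cases i <;> simp [hypBranch]

lemma hypRotation_mulVec (t : ℝ) (v : Fin 2 → ℝ) :
    hypRotation a t *ᵥ v = ![Real.cosh t * v 0 + Real.sinh t / a * v 1,
      a * Real.sinh t * v 0 + Real.cosh t * v 1] := by
  ext i; fin_cases i <;> simp [hypRotation, Matrix.mulVec, dotProduct]

lemma hypForm_hypRotation_mulVec (ha : a ≠ 0) (t : ℝ) (v : Fin 2 → ℝ) :
    hypForm a (hypRotation a t *ᵥ v) = hypForm a v := by
  simp only [hypForm, hypRotation_mulVec, Matrix.cons_val_zero, Matrix.cons_val_one]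
  field_simp
  linear_combination (a ^ 2 * v 0 ^ 2 - v 1 ^ 2) * Real.cosh_sq_sub_sinh_sq t

lemma hypRotation_mulVec_hypBranch (ha : a ≠ 0) (t s : ℝ) :
    hypRotation a t *ᵥ hypBranch a s = hypBranch a (t + s) := by
  rw [hypRotation_mulVec]
  ext i; fin_cases i
  · simp [hypBranch, Real.cosh_add]
    field_simp
  · simp [hypBranch, Real.sinh_add]
    ring

lemma hypForm_hypBranch (ha : a ≠ 0) (t : ℝ) : hypForm a (hypBranch a t) = 1 := by
  simp [hypForm, hypBranch, ha]

lemma mem_range_hypBranch (ha : a ≠ 0) {p : Fin 2 → ℝ} (hp : 0 < p 0) (hq : hypForm a p = 1) :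
    p ∈ Set.range (hypBranch a) := by
  refine ⟨Real.arsinh (p 1 / a), ?_⟩
  have hp0 : 1 + (p 1 / a) ^ 2 = p 0 ^ 2 := by rw [← hq, hypForm]; ring
  ext i; fin_cases i
  · simp [hypBranch, Real.cosh_arsinh, hp0, Real.sqrt_sq hp.le]
  · simp [hypBranch, Real.sinh_arsinh, mul_div_cancel₀ _ ha]

lemma connectedComponentIn_hypForm_sq_eq_one (ha : a ≠ 0) :
    connectedComponentIn {p | hypForm a p ^ 2 = 1} ![1, 0] = Set.range (hypBranch a) := by
  set S := {p | hypForm a p ^ 2 = 1}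
  set C := connectedComponentIn S ![1, 0]
  have hbase : ![1, 0] ∈ C := mem_connectedComponentIn (by simp [S, hypForm])
  have hC : IsPreconnected C := isPreconnected_connectedComponentIn
  have hCS : C ⊆ S := connectedComponentIn_subset _ _
  apply subset_antisymm
  · have hform : ∀ q ∈ C, hypForm a q = 1 := fun q hq => by
      have hsq : hypForm a q ^ 2 = 1 := hCS hq
      have := hC.pos_of_ne_zero (continuous_hypForm (a := a)).continuousOn
        (fun x hx h => by
          have : hypForm a x ^ 2 = 1 := hCS hx
          norm_num [h] at this) hbase (by simp [hypForm]) hq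
      nlinarith
    intro p hp
    refine mem_range_hypBranch ha (hC.pos_of_ne_zero (continuous_apply 0).continuousOn
      (fun q hq h => ?_) hbase (by simp) hp) (hform p hp)
    have := hform q hq
    rw [hypForm, h] at this
    nlinarith [sq_nonneg (q 1 / a)]
  · exact (isPreconnected_range continuous_hypBranch).subset_connectedComponentIn
      ⟨0, hypBranch_zero⟩ (by rintro _ ⟨t, rfl⟩; simp [S, hypForm_hypBranch ha])

end Hyperbola

lemma hLK_zero_quarter_eq_sq_hypForm (v : Fin 2 → ℝ) :
    hLK 0 (1 / 4) v = hypForm (Real.sqrt 2) v ^ 2 := by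
  simp only [hLK, hypForm, div_pow, Real.sq_sqrt zero_le_two]
  ring

lemma hessDet2_hLK_zero_quarter (p : Fin 2 → ℝ) :
    hessDet2 (hLK 0 (1 / 4)) p = -24 * hypForm (Real.sqrt 2) p ^ 2 := by
  simp only [hessDet2_hLK, hypForm, div_pow, Real.sq_sqrt zero_le_two]
  ring

lemma Hcurve_zero_quarter_eq_range : Hcurve 0 (1 / 4) = Set.range (hypBranch (Real.sqrt 2)) := by
  have hlevel : {p | hLK 0 (1 / 4) p = 1 ∧ hessDet2 (hLK 0 (1 / 4)) p < 0} =
      {p | hypForm (Real.sqrt 2) p ^ 2 = 1} := by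
    ext p
    simp only [Set.mem_ofPred_eq, hLK_zero_quarter_eq_sq_hypForm, hessDet2_hLK_zero_quarter]
    exact ⟨And.left, fun h => ⟨h, by rw [h]; norm_num⟩⟩
  rw [Hcurve, hlevel, connectedComponentIn_hypForm_sq_eq_one (by positivity)]

/-- **Homogeneity of the curve `x⁴ − x²y² + (1/4)y⁴ = 1`.**
The hyperbolic rotations `R_t` are linear automorphisms of `h_{0,1/4}` and act transitively
on `H_{0,1/4}`; in particular `H_{0,1/4}` is a homogeneous space under linear
automorphisms of `h_{0,1/4}`. -/
theorem homogeneity_curve_a :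
    (∀ (t : ℝ) (v : Fin 2 → ℝ),
      hLK 0 (1/4) ((!![Real.cosh t, Real.sinh t / Real.sqrt 2;
        Real.sqrt 2 * Real.sinh t, Real.cosh t]).mulVec v) = hLK 0 (1/4) v) ∧
    (∀ p ∈ Hcurve 0 (1/4), ∀ q ∈ Hcurve 0 (1/4), ∃ t : ℝ,
      (!![Real.cosh t, Real.sinh t / Real.sqrt 2;
        Real.sqrt 2 * Real.sinh t, Real.cosh t]).mulVec p = q) := by
  have hsqrt : Real.sqrt 2 ≠ 0 := by positivity
  refine ⟨fun t v => ?_, ?_⟩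
  · rw [hLK_zero_quarter_eq_sq_hypForm, hLK_zero_quarter_eq_sq_hypForm]
    exact congrArg (· ^ 2) (hypForm_hypRotation_mulVec hsqrt t v)
  · rw [Hcurve_zero_quarter_eq_range]
    rintro _ ⟨s, rfl⟩ _ ⟨u, rfl⟩
    exact ⟨u - s, (hypRotation_mulVec_hypBranch hsqrt _ _).trans (by rw [sub_add_cancel])⟩
end
end

section
/- Homogeneity of the curve x⁴ − x²y² + (2√2/(3√3))xy³ − (1/12)y⁴ = 1: let ã be the 2×2 real matrix with rows (0, √2/2) and (√2, 2/√3), and let h_b = h_{2√2/(3√3), −1/12}. Then h_b(exp(t·ã)·v) = h_b(v) for all v ∈ ℝ² and all t ∈ ℝ (equivalently, the differential of h_b at v applied to ã·v vanishes for every v ∈ ℝ²), and the one-parameter group {exp(t·ã) : t ∈ ℝ} acts transitively on H_{2√2/(3√3), −1/12}: for all p, q in this curve there exists t ∈ ℝ with exp(t·ã)·p = q. In particular H_{2√2/(3√3), −1/12} is a homogeneous space under linear automorphisms of h_b. -/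
/-!
Common definitions: the quartic polynomial `hLK L K (x,y) = x⁴ − x²y² + L·x·y³ + K·y⁴` on ℝ²,
the Hessian determinant of a function on ℝ², and the curve `Hcurve L K = H_{L,K}`,
the connected component containing (1,0) of the hyperbolic points on the level set {h = 1}.
-/

noncomputable section
open Matrix

/-!
`ã` is diagonalisable with eigenvalues `√3` and `-1/√3`. In its eigen-coordinates `(u, w)` the
quartic `h_b` becomes `256 u w³`, and `exp (t ã)` acts by `(u, w) ↦ (e^{√3 t} u, e^{-t/√3} w)`,
which preserves `u w³` because `√3 - 3/√3 = 0`. On `H_b ⊆ {256 u w³ = 1}` the coordinate `w`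
never vanishes, so by connectedness it has constant sign along `H_b`; the flow can then move
`w_p` to `w_q`, and the level equation forces `u_p` to follow to `u_q`.
-/

open Set

theorem IsPreconnected.mul_pos_of_forall_ne_zero {X : Type*} [TopologicalSpace X] {s : Set X}
    (hs : IsPreconnected s) {f : X → ℝ} (hf : ContinuousOn f s) (hne : ∀ x ∈ s, f x ≠ 0)
    {a b : X} (ha : a ∈ s) (hb : b ∈ s) : 0 < f a * f b := by
  by_contra! h
  have h0 : (0 : ℝ) ∈ uIcc (f a) (f b) := by
    rw [mem_uIcc]
    rcases mul_nonpos_iff.mp h with ⟨h1, h2⟩ | ⟨h1, h2⟩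
    · exact Or.inr ⟨h2, h1⟩
    · exact Or.inl ⟨h1, h2⟩
  obtain ⟨x, hx, hx0⟩ := (hs.image f hf).ordConnected.uIcc_subset
    (mem_image_of_mem f ha) (mem_image_of_mem f hb) h0
  exact hne x hx hx0

theorem Matrix.exp_smul_eq_conj_diagonal {n : Type*} [Fintype n] [DecidableEq n]
    {A : Matrix n n ℝ} {P : (Matrix n n ℝ)ˣ} {d : n → ℝ}
    (hA : A = P * diagonal d * P⁻¹) (t : ℝ) :
    NormedSpace.exp (t • A) = P * diagonal (fun i => Real.exp (t * d i)) * P⁻¹ := by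
  have hexp : NormedSpace.exp (t • d) = fun i => Real.exp (t * d i) := by
    funext i
    rw [Pi.coe_exp, Real.exp_eq_exp_ℝ]
    rfl
  rw [hA, ← smul_mul_assoc, ← mul_smul_comm, ← diagonal_smul, exp_units_conj, exp_diagonal, hexp]

theorem Matrix.inv_mulVec_exp_smul_mulVec {n : Type*} [Fintype n] [DecidableEq n]
    {A : Matrix n n ℝ} {P : (Matrix n n ℝ)ˣ} {d : n → ℝ}
    (hA : A = P * diagonal d * P⁻¹) (t : ℝ) (v : n → ℝ) (i : n) :
    (((P⁻¹ : (Matrix n n ℝ)ˣ) : Matrix n n ℝ) *ᵥ (NormedSpace.exp (t • A) *ᵥ v)) i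
      = Real.exp (t * d i) * (((P⁻¹ : (Matrix n n ℝ)ˣ) : Matrix n n ℝ) *ᵥ v) i := by
  rw [exp_smul_eq_conj_diagonal hA, mulVec_mulVec, ← mul_assoc, ← mul_assoc, Units.inv_mul,
    one_mul, ← mulVec_mulVec, mulVec_diagonal]

theorem exists_exp_mul_eq_of_mul_pow_three_eq {u w u' w' : ℝ} (hw : 0 < w * w')
    (h : u * w ^ 3 = u' * w' ^ 3) : ∃ s, Real.exp (3 * s) * u = u' ∧ Real.exp (-s) * w = w' := by
  have hpos : 0 < w / w' := by
    rcases mul_pos_iff.mp hw with ⟨h1, h2⟩ | ⟨h1, h2⟩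
    exacts [div_pos h1 h2, div_pos_of_neg_of_neg h1 h2]
  have hw0 : w ≠ 0 := by rintro rfl; simp at hw
  have hw'0 : w' ≠ 0 := by rintro rfl; simp at hw
  refine ⟨Real.log (w / w'), ?_, ?_⟩
  · rw [show (3 : ℝ) = (3 : ℕ) by norm_num, Real.exp_nat_mul, Real.exp_log hpos]
    field_simp
    linear_combination h
  · rw [Real.exp_neg, Real.exp_log hpos, inv_div]
    field_simp

section CurveB

local notation "h_b" => hLK (2 * √2 / (3 * √3)) (-(1/12))
local notation "H_b" => Hcurve (2 * √2 / (3 * √3)) (-(1/12))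
local notation "ã" => (!![0, √2 / 2; √2, 2 / √3] : Matrix (Fin 2) (Fin 2) ℝ)

theorem sqrt_six_eq_sqrt_two_mul_sqrt_three : √6 = √2 * √3 := by
  rw [← Real.sqrt_mul (by norm_num)]; norm_num

/-- Its columns are eigenvectors of `ã` for the eigenvalues `√3` and `-1/√3`. -/
def eigenbasis : (Matrix (Fin 2) (Fin 2) ℝ)ˣ where
  val := !![1, 3; √6, -√6]
  inv := !![1 / 4, √6 / 8; 1 / 4, -(√6 / 24)]
  val_inv := by
    ext i j
    fin_cases i <;> fin_cases j <;> simp [Matrix.mul_apply, Fin.sum_univ_two] <;>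
      nlinarith [Real.sq_sqrt (show (0:ℝ) ≤ 6 by norm_num)]
  inv_val := by
    ext i j
    fin_cases i <;> fin_cases j <;> simp [Matrix.mul_apply, Fin.sum_univ_two] <;>
      nlinarith [Real.sq_sqrt (show (0:ℝ) ≤ 6 by norm_num)]

theorem aTilde_eq_conj_diagonal :
    ã = eigenbasis * diagonal ![√3, -(√3)⁻¹] * (↑eigenbasis⁻¹ : Matrix (Fin 2) (Fin 2) ℝ) := by
  have h2 : √2 ^ 2 = 2 := Real.sq_sqrt (by norm_num)
  have h3 : √3 ^ 2 = 3 := Real.sq_sqrt (by norm_num)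
  ext i j
  fin_cases i <;> fin_cases j <;>
    simp [eigenbasis, sqrt_six_eq_sqrt_two_mul_sqrt_three, Matrix.mul_apply, Fin.sum_univ_two,
      vecMul_diagonal] <;>
    field_simp <;> norm_num [h2, h3]

theorem hb_eigenbasis_mulVec (c : Fin 2 → ℝ) : h_b (eigenbasis *ᵥ c) = 256 * c 0 * c 1 ^ 3 := by
  have h6 : √6 ^ 2 = 6 := Real.sq_sqrt (by norm_num)
  have hL : 2 * √2 / (3 * √3) * √6 ^ 3 = 8 := by
    have h2 : √2 ^ 2 = 2 := Real.sq_sqrt (by norm_num)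
    have h3 : √3 ^ 2 = 3 := Real.sq_sqrt (by norm_num)
    rw [sqrt_six_eq_sqrt_two_mul_sqrt_three]
    field_simp
    rw [show √2 ^ 4 = (√2 ^ 2) ^ 2 by ring, h2, h3]
    norm_num
  simp only [hLK, eigenbasis, mulVec, dotProduct, of_apply, cons_val', cons_val_fin_one,
    cons_val_zero, cons_val_one, Fin.sum_univ_two]
  linear_combination
    (-(c 0 + 3 * c 1) ^ 2 * (c 0 - c 1) ^ 2 - (√6 ^ 2 + 6) / 12 * (c 0 - c 1) ^ 4) * h6
      + (c 0 + 3 * c 1) * (c 0 - c 1) ^ 3 * hL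

def eigencoords (v : Fin 2 → ℝ) : Fin 2 → ℝ := (↑eigenbasis⁻¹ : Matrix (Fin 2) (Fin 2) ℝ) *ᵥ v

theorem eigencoords_injective : Function.Injective eigencoords :=
  mulVec_injective_iff_isUnit.mpr (Units.isUnit _)

theorem hb_eq_eigencoords (v : Fin 2 → ℝ) :
    h_b v = 256 * eigencoords v 0 * eigencoords v 1 ^ 3 := by
  have h := hb_eigenbasis_mulVec (eigencoords v)
  rwa [eigencoords, mulVec_mulVec, Units.mul_inv, one_mulVec] at h

theorem eigencoords_exp_smul_mulVec (t : ℝ) (v : Fin 2 → ℝ) :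
    eigencoords (NormedSpace.exp (t • ã) *ᵥ v) =
      ![Real.exp (t * √3) * eigencoords v 0, Real.exp (t * -(√3)⁻¹) * eigencoords v 1] := by
  ext i
  fin_cases i <;> exact inv_mulVec_exp_smul_mulVec aTilde_eq_conj_diagonal t v _

theorem hb_exp_smul_mulVec (t : ℝ) (v : Fin 2 → ℝ) :
    h_b (NormedSpace.exp (t • ã) *ᵥ v) = h_b v := by
  have hweights : Real.exp (t * √3) * Real.exp (t * -(√3)⁻¹) ^ 3 = 1 := by
    rw [← Real.exp_nat_mul, ← Real.exp_add, Real.exp_eq_one_iff]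
    field_simp
    simp [Real.sq_sqrt]
  simp only [hb_eq_eigencoords, eigencoords_exp_smul_mulVec, cons_val_zero, cons_val_one]
  linear_combination 256 * eigencoords v 0 * eigencoords v 1 ^ 3 * hweights

theorem Hcurve_subset_level_set (L K : ℝ) : Hcurve L K ⊆ {p | hLK L K p = 1} :=
  fun _ hp => (connectedComponentIn_subset _ _ hp).1

theorem exists_exp_smul_mulVec_eq {p q : Fin 2 → ℝ} (hp : p ∈ H_b) (hq : q ∈ H_b) :
    ∃ t : ℝ, NormedSpace.exp (t • ã) *ᵥ p = q := by
  have hlevel : ∀ r ∈ H_b, 256 * eigencoords r 0 * eigencoords r 1 ^ 3 = 1 :=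
    fun r hr => (hb_eq_eigencoords r).symm.trans (Hcurve_subset_level_set _ _ hr)
  have hne : ∀ r ∈ H_b, eigencoords r 1 ≠ 0 := fun r hr h0 => by simpa [h0] using hlevel r hr
  have hsign : 0 < eigencoords p 1 * eigencoords q 1 :=
    isPreconnected_connectedComponentIn.mul_pos_of_forall_ne_zero
      (by unfold eigencoords; fun_prop) hne hp hq
  obtain ⟨s, hs0, hs1⟩ := exists_exp_mul_eq_of_mul_pow_three_eq (u := eigencoords p 0)
    (u' := eigencoords q 0) hsign (by linear_combination (hlevel p hp - hlevel q hq) / 256)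
  refine ⟨√3 * s, eigencoords_injective ?_⟩
  have h3 : √3 ≠ 0 := by positivity
  rw [eigencoords_exp_smul_mulVec,
    show √3 * s * √3 = 3 * s by rw [mul_right_comm, Real.mul_self_sqrt (by norm_num)],
    show √3 * s * -(√3)⁻¹ = -s by field_simp, hs0, hs1]
  ext i
  fin_cases i <;> rfl

end CurveB

/-- **Homogeneity of the curve `x⁴ − x²y² + (2√2/(3√3))xy³ − (1/12)y⁴ = 1`.**
With `ã` the matrix with rows `(0, √2/2)` and `(√2, 2/√3)`, the one-parameter group
`exp(t·ã)` consists of linear automorphisms of `h_b = h_{2√2/(3√3), −1/12}` and acts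
transitively on `H_{2√2/(3√3), −1/12}`. -/
theorem homogeneity_curve_b :
    (∀ (t : ℝ) (v : Fin 2 → ℝ),
      hLK (2 * Real.sqrt 2 / (3 * Real.sqrt 3)) (-(1/12))
        ((NormedSpace.exp
          (t • (!![0, Real.sqrt 2 / 2; Real.sqrt 2, 2 / Real.sqrt 3] :
            Matrix (Fin 2) (Fin 2) ℝ))).mulVec v) =
      hLK (2 * Real.sqrt 2 / (3 * Real.sqrt 3)) (-(1/12)) v) ∧
    (∀ p ∈ Hcurve (2 * Real.sqrt 2 / (3 * Real.sqrt 3)) (-(1/12)),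
      ∀ q ∈ Hcurve (2 * Real.sqrt 2 / (3 * Real.sqrt 3)) (-(1/12)), ∃ t : ℝ,
        (NormedSpace.exp
          (t • (!![0, Real.sqrt 2 / 2; Real.sqrt 2, 2 / Real.sqrt 3] :
            Matrix (Fin 2) (Fin 2) ℝ))).mulVec p = q) :=
  ⟨hb_exp_smul_mulVec, fun _ hp _ hq => exists_exp_smul_mulVec_eq hp hq⟩
end
end

section
/- Nonvanishing of ∂h/∂x on the cone (Lemma 2.17): let τ ≥ 3 be an integer, let c₃,…,c_τ be real numbers, and define h : ℝ² → ℝ by h(x,y) = x^τ − x^{τ−2}y² + Σ_{k=3}^{τ} c_k·x^{τ−k}·y^k. Let H be the connected component containing (1,0) of the set {p ∈ ℝ² : h(p) = 1 and det(Hess h)(p) < 0}. Then the partial derivative ∂h/∂x does not vanish at any point of the cone ℝ_{>0}·H. -/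
noncomputable section

/-!
Write `φ θ = h (cos θ, sin θ)` and `f = φ ^ (1 / τ)`. Where `φ > 0`, Euler's identities for the
homogeneous `h` make `det Hess h (cos θ, sin θ)` a positive multiple of `f'' + f`, so `f'' + f < 0`
at hyperbolic directions. Sturm comparison with `sin` (along which `f' sin - f cos` is monotone)
shows that the arc of hyperbolic directions through `θ = 0` is an open interval of length at most
`π`, and that on it `f cos θ - f' sin θ`, a positive multiple of `∂h/∂x (cos θ, sin θ)`, stays
above its value `f 0 > 0` at `θ = 0`. The open sector over the arc meets
`{h = 1, det Hess h < 0}` in a relatively clopen set, hence contains `H`; and `∂h/∂x` is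
homogeneous of degree `τ - 1`.
-/
open Real Set Topology

namespace HyperbolicComponent

section Homogeneous

variable {E : Type*} [NormedAddCommGroup E] [NormedSpace ℝ E]

def IsPosHomogeneous (h : E → ℝ) (τ : ℕ) : Prop :=
  ∀ ⦃l : ℝ⦄, 0 < l → ∀ v, h (l • v) = l ^ τ * h v

variable {h : E → ℝ} {τ : ℕ}

lemma IsPosHomogeneous.map_zero (hh : IsPosHomogeneous h τ) (hτ : τ ≠ 0) : h 0 = 0 := by
  have h2 := hh two_pos 0
  rw [smul_zero] at h2
  have : (1 : ℝ) < 2 ^ τ := one_lt_pow₀ one_lt_two hτ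
  nlinarith

lemma IsPosHomogeneous.fderiv_apply (hh : IsPosHomogeneous h τ) (hd : Differentiable ℝ h)
    (hτ : 1 ≤ τ) (w : E) : IsPosHomogeneous (fun p => fderiv ℝ h p w) (τ - 1) := by
  intro l hl p
  have hcomp : fderiv ℝ (fun v => h (l • v)) p = l • fderiv ℝ h (l • p) := fderiv_comp_smul l
  have hscale : fderiv ℝ (fun v => h (l • v)) p = l ^ τ • fderiv ℝ h p := by
    rw [show (fun v => h (l • v)) = fun v => l ^ τ * h v from funext (hh hl)]
    exact fderiv_const_mul (hd p) _
  have happ := congrArg (· w) (hcomp.symm.trans hscale)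
  simp only [FunLike.coe_smul, Pi.smul_apply, smul_eq_mul] at happ
  rw [← Nat.sub_add_cancel hτ, pow_succ] at happ
  exact mul_right_cancel₀ hl.ne' (by linear_combination happ)

lemma IsPosHomogeneous.fderiv_self (hh : IsPosHomogeneous h τ) (hd : Differentiable ℝ h)
    (p : E) : fderiv ℝ h p p = τ * h p := by
  have hray : HasDerivAt (fun t : ℝ => h (t • p)) (fderiv ℝ h p p) 1 := by
    have := (hd _).hasFDerivAt.comp_hasDerivAt (1 : ℝ) ((hasDerivAt_id (1 : ℝ)).smul_const p)
    simpa [Function.comp_def] using this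
  have hpow : HasDerivAt (fun t : ℝ => t ^ τ * h p) (τ * h p) 1 := by
    simpa using (hasDerivAt_pow τ (1 : ℝ)).mul_const (h p)
  have heq : (fun t : ℝ => h (t • p)) =ᶠ[𝓝 1] fun t => t ^ τ * h p := by
    filter_upwards [lt_mem_nhds one_pos] with t ht using hh ht p
  exact (hray.congr_of_eventuallyEq heq.symm).unique hpow

lemma fderiv_fun_fderiv_apply {p : E} (hd : DifferentiableAt ℝ (fderiv ℝ h) p) (v w : E) :
    fderiv ℝ (fun q => fderiv ℝ h q w) p v = fderiv ℝ (fderiv ℝ h) p v w := by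
  rw [fderiv_clm_apply hd (differentiableAt_const w)]
  simp

lemma IsPosHomogeneous.fderiv_fderiv_apply (hh : IsPosHomogeneous h τ)
    (hsm : ContDiff ℝ 2 h) (hτ : 2 ≤ τ) (v w : E) :
    IsPosHomogeneous (fun p => fderiv ℝ (fderiv ℝ h) p v w) (τ - 2) := by
  have hd2 : Differentiable ℝ (fderiv ℝ h) :=
    (hsm.fderiv_right (m := 1) le_rfl).differentiable one_ne_zero
  have hw := hh.fderiv_apply (hsm.differentiable two_ne_zero) (by omega) w
  have := hw.fderiv_apply (hd2.clm_apply (differentiable_const w)) (by omega) v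
  simpa [fderiv_fun_fderiv_apply (hd2 _), Nat.sub_sub] using this

lemma IsPosHomogeneous.fderiv_fderiv_self (hh : IsPosHomogeneous h τ)
    (hsm : ContDiff ℝ 2 h) (hτ : 1 ≤ τ) (p w : E) :
    fderiv ℝ (fderiv ℝ h) p p w = (τ - 1 : ℝ) * fderiv ℝ h p w := by
  have hd2 : Differentiable ℝ (fderiv ℝ h) :=
    (hsm.fderiv_right (m := 1) le_rfl).differentiable one_ne_zero
  have hw := hh.fderiv_apply (hsm.differentiable two_ne_zero) hτ w
  have := hw.fderiv_self (hd2.clm_apply (differentiable_const w)) p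
  rw [fderiv_fun_fderiv_apply (hd2 p)] at this
  rw [this, Nat.cast_sub hτ, Nat.cast_one]

end Homogeneous

section Sturm

variable {f f' f'' : ℝ → ℝ}

lemma hasDerivAt_mul_sin_sub_mul_cos {x : ℝ} (hf : HasDerivAt f (f' x) x)
    (hf' : HasDerivAt f' (f'' x) x) (c : ℝ) :
    HasDerivAt (fun x => f' x * sin (x - c) - f x * cos (x - c))
      ((f'' x + f x) * sin (x - c)) x := by
  have hs := (hasDerivAt_sin (x - c)).comp x ((hasDerivAt_id x).sub_const c)
  have hc := (hasDerivAt_cos (x - c)).comp x ((hasDerivAt_id x).sub_const c)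
  exact ((hf'.mul hs).sub (hf.mul hc)).congr_deriv (by simp; ring)

lemma add_neg_of_deriv2_add_neg {c : ℝ}
    (hf : ∀ x ∈ Icc c (c + π), HasDerivAt f (f' x) x)
    (hf' : ∀ x ∈ Icc c (c + π), HasDerivAt f' (f'' x) x)
    (hneg : ∀ x ∈ Ioo c (c + π), f'' x + f x < 0) : f c + f (c + π) < 0 := by
  set W := fun x => f' x * sin (x - c) - f x * cos (x - c)
  have hW (x) (hx : x ∈ Icc c (c + π)) : HasDerivAt W ((f'' x + f x) * sin (x - c)) x :=
    hasDerivAt_mul_sin_sub_mul_cos (hf x hx) (hf' x hx) c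
  obtain ⟨ξ, hξ, hslope⟩ := exists_hasDerivAt_eq_slope W _ (by linarith [pi_pos])
    (fun x hx => (hW x hx).continuousAt.continuousWithinAt)
    (fun x hx => hW x (Ioo_subset_Icc_self hx))
  have hsin : 0 < sin (ξ - c) :=
    sin_pos_of_pos_of_lt_pi (by linarith [hξ.1]) (by linarith [hξ.2])
  have hslope_neg := mul_neg_of_neg_of_pos (hneg ξ hξ) hsin
  simp only [hslope, W, sub_self, sin_zero, cos_zero, add_sub_cancel_left, sin_pi,
    cos_pi] at hslope_neg
  have := (div_lt_iff₀ pi_pos).1 hslope_neg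
  linarith

lemma le_mul_cos_sub_mul_sin {θ : ℝ} (hθ : θ ∈ Ioo (-π) π)
    (hf : ∀ x ∈ uIcc 0 θ, HasDerivAt f (f' x) x)
    (hf' : ∀ x ∈ uIcc 0 θ, HasDerivAt f' (f'' x) x)
    (hle : ∀ x ∈ uIcc 0 θ, f'' x + f x ≤ 0) :
    f 0 ≤ f θ * cos θ - f' θ * sin θ := by
  set W := fun x => f' x * sin x - f x * cos x
  have hW (x) (hx : x ∈ uIcc 0 θ) : HasDerivAt W ((f'' x + f x) * sin x) x := by
    simpa using hasDerivAt_mul_sin_sub_mul_cos (hf x hx) (hf' x hx) 0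
  suffices W θ ≤ W 0 by simp only [W, sin_zero, cos_zero] at this; linarith
  rcases lt_trichotomy θ 0 with hθ0 | rfl | hθ0
  · have hsub : Icc θ 0 ⊆ uIcc 0 θ := Icc_subset_uIcc'
    obtain ⟨ξ, hξ, hslope⟩ := exists_hasDerivAt_eq_slope W _ hθ0
      (fun x hx => (hW x (hsub hx)).continuousAt.continuousWithinAt)
      (fun x hx => hW x (hsub (Ioo_subset_Icc_self hx)))
    have hsin : sin ξ < 0 := sin_neg_of_neg_of_neg_pi_lt hξ.2 (by linarith [hθ.1, hξ.1])
    have hderiv :=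
      mul_nonneg_of_nonpos_of_nonpos (hle ξ (hsub (Ioo_subset_Icc_self hξ))) hsin.le
    rw [hslope, le_div_iff₀ (by linarith)] at hderiv
    linarith
  · rfl
  · have hsub : Icc 0 θ ⊆ uIcc 0 θ := Icc_subset_uIcc
    obtain ⟨ξ, hξ, hslope⟩ := exists_hasDerivAt_eq_slope W _ hθ0
      (fun x hx => (hW x (hsub hx)).continuousAt.continuousWithinAt)
      (fun x hx => hW x (hsub (Ioo_subset_Icc_self hx)))
    have hsin : 0 < sin ξ := sin_pos_of_pos_of_lt_pi hξ.1 (by linarith [hθ.2, hξ.2])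
    have hderiv :=
      mul_nonpos_of_nonpos_of_nonneg (hle ξ (hsub (Ioo_subset_Icc_self hξ))) hsin.le
    rw [hslope, div_le_iff₀ (by linarith)] at hderiv
    linarith

end Sturm

section Interval

lemma exists_eq_Ioo_of_forall_not_Icc_subset {s : Set ℝ} (hs : IsOpen s)
    (hc : IsPreconnected s) {x : ℝ} (hx : x ∈ s) {L : ℝ} (hL : ∀ c, ¬ Icc c (c + L) ⊆ s) :
    ∃ a b, s = Ioo a b ∧ b - a ≤ L := by
  have hbound : s ⊆ Ioo (x - L) (x + L) := by
    intro y hy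
    constructor
    · by_contra! hyx
      exact hL y ((Icc_subset_Icc le_rfl (by linarith)).trans (hc.ordConnected.out hy hx))
    · by_contra! hyx
      exact hL x ((Icc_subset_Icc le_rfl hyx).trans (hc.ordConnected.out hx hy))
  have hbdd : BddBelow s := ⟨x - L, fun y hy => (hbound hy).1.le⟩
  have hbdd' : BddAbove s := ⟨x + L, fun y hy => (hbound hy).2.le⟩
  have hIoo : s = Ioo (sInf s) (sSup s) := by
    refine Subset.antisymm (fun y hy => ⟨(csInf_le hbdd hy).lt_of_ne ?_,
      (le_csSup hbdd' hy).lt_of_ne' ?_⟩)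
      (IsConnected.Ioo_csInf_csSup_subset ⟨⟨x, hx⟩, hc⟩ hbdd hbdd')
    · rintro hy'
      obtain ⟨z, hz, hzs⟩ :=
        Filter.Eventually.exists_lt (hs.mem_nhds (show sInf s ∈ s from hy' ▸ hy))
      exact (csInf_le hbdd hzs).not_gt hz
    · rintro hy'
      obtain ⟨z, hz, hzs⟩ :=
        Filter.Eventually.exists_gt (hs.mem_nhds (show sSup s ∈ s from hy' ▸ hy))
      exact (le_csSup hbdd' hzs).not_gt hz
  refine ⟨sInf s, sSup s, hIoo, ?_⟩
  by_contra! hwide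
  refine hL ((sInf s + sSup s - L) / 2) fun y hy => hIoo ▸ ?_
  exact ⟨by linarith [hy.1], by linarith [hy.2]⟩

lemma notMem_of_connectedComponentIn_eq_Ioo {s : Set ℝ} {x a b : ℝ} (hx : x ∈ s)
    (hcomp : connectedComponentIn s x = Ioo a b) : a ∉ s ∧ b ∉ s := by
  have hxab : x ∈ Ioo a b := hcomp ▸ mem_connectedComponentIn hx
  have hIoo : Ioo a b ⊆ s := hcomp ▸ connectedComponentIn_subset s x
  have hab : a < b := hxab.1.trans hxab.2
  constructor
  · intro ha
    have hsub := isPreconnected_Ico.subset_connectedComponentIn (Ioo_subset_Ico_self hxab)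
      ((Ioo_insert_left hab).symm ▸ insert_subset ha hIoo)
    exact (hcomp ▸ hsub (left_mem_Ico.2 hab)).1.false
  · intro hb
    have hsub := isPreconnected_Ioc.subset_connectedComponentIn (Ioo_subset_Ioc_self hxab)
      ((Ioo_insert_right hab).symm ▸ insert_subset hb hIoo)
    exact (hcomp ▸ hsub (right_mem_Ioc.2 hab)).2.false

end Interval

section Plane

def dir (θ : ℝ) : Fin 2 → ℝ := ![cos θ, sin θ]

def dirPerp (θ : ℝ) : Fin 2 → ℝ := ![-sin θ, cos θ]

lemma hasDerivAt_dir (θ : ℝ) : HasDerivAt dir (dirPerp θ) θ := by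
  refine hasDerivAt_pi.2 fun i => ?_
  fin_cases i
  · simpa [dir, dirPerp] using hasDerivAt_cos θ
  · simpa [dir, dirPerp] using hasDerivAt_sin θ

lemma hasDerivAt_dirPerp (θ : ℝ) : HasDerivAt dirPerp (-dir θ) θ := by
  refine hasDerivAt_pi.2 fun i => ?_
  fin_cases i
  · simpa [dir, dirPerp] using (hasDerivAt_sin θ).fun_neg
  · simpa [dir, dirPerp] using hasDerivAt_cos θ

lemma continuous_dir : Continuous dir :=
  continuous_iff_continuousAt.2 fun θ => (hasDerivAt_dir θ).continuousAt

lemma periodic_dir : Function.Periodic dir (2 * π) := fun θ => by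
  simp [dir]

lemma single_zero_eq_dir (θ : ℝ) :
    (Pi.single 0 1 : Fin 2 → ℝ) = cos θ • dir θ - sin θ • dirPerp θ := by
  ext i
  fin_cases i <;> simp [dir, dirPerp] <;> nlinarith [sin_sq_add_cos_sq θ]

lemma single_one_eq_dir (θ : ℝ) :
    (Pi.single 1 1 : Fin 2 → ℝ) = sin θ • dir θ + cos θ • dirPerp θ := by
  ext i
  fin_cases i <;> simp [dir, dirPerp] <;> nlinarith [sin_sq_add_cos_sq θ]

lemma det_bilin_rotate (B : (Fin 2 → ℝ) →L[ℝ] (Fin 2 → ℝ) →L[ℝ] ℝ) (θ : ℝ) :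
    B (Pi.single 0 1) (Pi.single 0 1) * B (Pi.single 1 1) (Pi.single 1 1) -
        B (Pi.single 0 1) (Pi.single 1 1) * B (Pi.single 1 1) (Pi.single 0 1) =
      B (dir θ) (dir θ) * B (dirPerp θ) (dirPerp θ) -
        B (dir θ) (dirPerp θ) * B (dirPerp θ) (dir θ) := by
  rw [single_zero_eq_dir θ, single_one_eq_dir θ]
  simp only [map_sub, map_add, map_smul, sub_apply, add_apply, smul_apply, smul_eq_mul]
  linear_combination (B (dir θ) (dir θ) * B (dirPerp θ) (dirPerp θ) -
    B (dir θ) (dirPerp θ) * B (dirPerp θ) (dir θ)) * (sin θ ^ 2 + cos θ ^ 2 + 1) *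
    sin_sq_add_cos_sq θ

variable {h : (Fin 2 → ℝ) → ℝ} {τ : ℕ}

lemma hessDet2_eq (h : (Fin 2 → ℝ) → ℝ) (p : Fin 2 → ℝ) :
    hessDet2 h p =
      fderiv ℝ (fderiv ℝ h) p (Pi.single 0 1) (Pi.single 0 1) *
          fderiv ℝ (fderiv ℝ h) p (Pi.single 1 1) (Pi.single 1 1) -
        fderiv ℝ (fderiv ℝ h) p (Pi.single 0 1) (Pi.single 1 1) *
          fderiv ℝ (fderiv ℝ h) p (Pi.single 1 1) (Pi.single 0 1) := by
  simp [hessDet2, Matrix.det_fin_two, iteratedFDeriv_two_apply]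

lemma continuous_hessDet2 (hsm : ContDiff ℝ 2 h) : Continuous (hessDet2 h) := by
  have hc : Continuous (fderiv ℝ (fderiv ℝ h)) :=
    ((hsm.fderiv_right (m := 1) le_rfl).fderiv_right (m := 0) le_rfl).continuous
  simp only [funext (hessDet2_eq h)]
  fun_prop

lemma IsPosHomogeneous.hessDet2 (hh : IsPosHomogeneous h τ) (hsm : ContDiff ℝ 2 h)
    (hτ : 2 ≤ τ) : IsPosHomogeneous (hessDet2 h) (2 * (τ - 2)) := by
  intro l hl p
  simp only [hessDet2_eq, hh.fderiv_fderiv_apply hsm hτ _ _ hl]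
  ring

end Plane

section Circle

variable {h : (Fin 2 → ℝ) → ℝ} {τ : ℕ}

def angularDeriv (h : (Fin 2 → ℝ) → ℝ) (θ : ℝ) : ℝ := fderiv ℝ h (dir θ) (dirPerp θ)

def angularDeriv2 (τ : ℕ) (h : (Fin 2 → ℝ) → ℝ) (θ : ℝ) : ℝ :=
  fderiv ℝ (fderiv ℝ h) (dir θ) (dirPerp θ) (dirPerp θ) - τ * h (dir θ)

lemma hasDerivAt_comp_dir (hsm : ContDiff ℝ 2 h) (θ : ℝ) :
    HasDerivAt (fun θ => h (dir θ)) (angularDeriv h θ) θ :=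
  ((hsm.differentiable two_ne_zero) _).hasFDerivAt.comp_hasDerivAt θ (hasDerivAt_dir θ)

lemma hasDerivAt_angularDeriv (hsm : ContDiff ℝ 2 h) (hh : IsPosHomogeneous h τ) (θ : ℝ) :
    HasDerivAt (angularDeriv h) (angularDeriv2 τ h θ) θ := by
  have hd2 : Differentiable ℝ (fderiv ℝ h) :=
    (hsm.fderiv_right (m := 1) le_rfl).differentiable one_ne_zero
  have := ((hd2 _).hasFDerivAt.comp_hasDerivAt θ (hasDerivAt_dir θ)).clm_apply
    (hasDerivAt_dirPerp θ)
  rwa [Function.comp_apply, map_neg, hh.fderiv_self (hsm.differentiable two_ne_zero),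
    ← sub_eq_add_neg] at this

lemma fderiv_dir_single_zero (hh : IsPosHomogeneous h τ) (hd : Differentiable ℝ h) (θ : ℝ) :
    fderiv ℝ h (dir θ) (Pi.single 0 1) = τ * h (dir θ) * cos θ - angularDeriv h θ * sin θ := by
  rw [single_zero_eq_dir θ, map_sub, map_smul, map_smul, smul_eq_mul, smul_eq_mul,
    hh.fderiv_self hd, angularDeriv]
  ring

lemma hessDet2_dir (hsm : ContDiff ℝ 2 h) (hh : IsPosHomogeneous h τ) (hτ : 1 ≤ τ) (θ : ℝ) :
    hessDet2 h (dir θ) = (τ - 1) * (τ * h (dir θ) * (angularDeriv2 τ h θ + τ * h (dir θ)) -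
      (τ - 1) * angularDeriv h θ ^ 2) := by
  have hsymm : fderiv ℝ (fderiv ℝ h) (dir θ) (dirPerp θ) (dir θ) =
      fderiv ℝ (fderiv ℝ h) (dir θ) (dir θ) (dirPerp θ) :=
    hsm.contDiffAt.isSymmSndFDerivAt (by simp) _ _
  rw [hessDet2_eq, det_bilin_rotate _ θ, hsymm, hh.fderiv_fderiv_self hsm hτ,
    hh.fderiv_fderiv_self hsm hτ, hh.fderiv_self (hsm.differentiable two_ne_zero),
    angularDeriv2, angularDeriv]
  ring

/-- For homogeneous `h`, these are the directions of the rays that meet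
`{p | h p = 1 ∧ hessDet2 h p < 0}`. -/
def hypAngles (h : (Fin 2 → ℝ) → ℝ) : Set ℝ := {θ | 0 < h (dir θ) ∧ hessDet2 h (dir θ) < 0}

def angularRoot (τ : ℕ) (h : (Fin 2 → ℝ) → ℝ) (θ : ℝ) : ℝ := h (dir θ) ^ (τ⁻¹ : ℝ)

def angularRoot' (τ : ℕ) (h : (Fin 2 → ℝ) → ℝ) (θ : ℝ) : ℝ :=
  (τ : ℝ)⁻¹ * h (dir θ) ^ ((τ : ℝ)⁻¹ - 1) * angularDeriv h θ

def angularRoot'' (τ : ℕ) (h : (Fin 2 → ℝ) → ℝ) (θ : ℝ) : ℝ :=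
  (τ : ℝ)⁻¹ * (((τ : ℝ)⁻¹ - 1) * h (dir θ) ^ ((τ : ℝ)⁻¹ - 2) * angularDeriv h θ ^ 2 +
    h (dir θ) ^ ((τ : ℝ)⁻¹ - 1) * angularDeriv2 τ h θ)

lemma hasDerivAt_angularRoot (hsm : ContDiff ℝ 2 h) {θ : ℝ} (hθ : 0 < h (dir θ)) :
    HasDerivAt (angularRoot τ h) (angularRoot' τ h θ) θ := by
  have := (hasDerivAt_comp_dir hsm θ).rpow_const (p := (τ : ℝ)⁻¹) (Or.inl hθ.ne')
  exact this.congr_deriv (by rw [angularRoot']; ring)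

lemma hasDerivAt_angularRoot' (hsm : ContDiff ℝ 2 h) (hh : IsPosHomogeneous h τ) {θ : ℝ}
    (hθ : 0 < h (dir θ)) : HasDerivAt (angularRoot' τ h) (angularRoot'' τ h θ) θ := by
  have hpow := (hasDerivAt_comp_dir hsm θ).rpow_const (p := (τ : ℝ)⁻¹ - 1) (Or.inl hθ.ne')
  have := (hpow.const_mul (τ : ℝ)⁻¹).mul (hasDerivAt_angularDeriv hsm hh θ)
  refine this.congr_deriv ?_
  rw [angularRoot'', show (τ : ℝ)⁻¹ - 2 = (τ : ℝ)⁻¹ - 1 - 1 by ring]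
  ring

lemma angularRoot''_add_neg (hsm : ContDiff ℝ 2 h) (hh : IsPosHomogeneous h τ) (hτ : 2 ≤ τ)
    {θ : ℝ} (hθ : θ ∈ hypAngles h) : angularRoot'' τ h θ + angularRoot τ h θ < 0 := by
  obtain ⟨hpos, hhess⟩ := hθ
  set φ := h (dir θ)
  have hτ' : (2 : ℝ) ≤ τ := by exact_mod_cast hτ
  have hpow1 : φ ^ ((τ : ℝ)⁻¹ - 1) = φ ^ ((τ : ℝ)⁻¹ - 2) * φ := by
    rw [← rpow_add_one hpos.ne']; ring_nf
  have hpow0 : φ ^ (τ : ℝ)⁻¹ = φ ^ ((τ : ℝ)⁻¹ - 2) * φ ^ 2 := by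
    rw [← rpow_add_natCast hpos.ne']; push_cast; ring_nf
  have hsum : angularRoot'' τ h θ + angularRoot τ h θ =
      ((τ : ℝ) ^ 2)⁻¹ * φ ^ ((τ : ℝ)⁻¹ - 2) *
        (τ * φ * (angularDeriv2 τ h θ + τ * φ) - (τ - 1) * angularDeriv h θ ^ 2) := by
    rw [angularRoot'', angularRoot, hpow1, hpow0]
    generalize φ ^ ((τ : ℝ)⁻¹ - 2) = R
    field_simp
    ring
  have hbracket :
      τ * φ * (angularDeriv2 τ h θ + τ * φ) - (τ - 1) * angularDeriv h θ ^ 2 < 0 := by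
    rw [hessDet2_dir hsm hh (by omega)] at hhess
    exact neg_of_mul_neg_right hhess (by linarith)
  rw [hsum]
  exact mul_neg_of_pos_of_neg (by positivity) hbracket

lemma angularRoot_mul_cos_sub (hh : IsPosHomogeneous h τ) (hd : Differentiable ℝ h)
    (hτ : τ ≠ 0) {θ : ℝ} (hθ : 0 < h (dir θ)) :
    angularRoot τ h θ * cos θ - angularRoot' τ h θ * sin θ =
      (τ : ℝ)⁻¹ * h (dir θ) ^ ((τ : ℝ)⁻¹ - 1) * fderiv ℝ h (dir θ) (Pi.single 0 1) := by
  have hpow : h (dir θ) ^ (τ : ℝ)⁻¹ = h (dir θ) ^ ((τ : ℝ)⁻¹ - 1) * h (dir θ) := by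
    rw [← rpow_add_one hθ.ne']; ring_nf
  rw [fderiv_dir_single_zero hh hd, angularRoot, angularRoot', hpow]
  generalize h (dir θ) ^ ((τ : ℝ)⁻¹ - 1) = R
  field_simp

end Circle

section Sector

def cross (p q : Fin 2 → ℝ) : ℝ := p 0 * q 1 - p 1 * q 0

lemma cross_dir_dir (s t : ℝ) : cross (dir s) (dir t) = sin (t - s) := by
  simp only [cross, dir, Matrix.cons_val_zero, Matrix.cons_val_one, sin_sub]
  ring

lemma cross_smul_left (r : ℝ) (p q : Fin 2 → ℝ) : cross (r • p) q = r * cross p q := by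
  simp only [cross, Pi.smul_apply, smul_eq_mul]
  ring

lemma cross_smul_right (r : ℝ) (p q : Fin 2 → ℝ) : cross p (r • q) = r * cross p q := by
  simp only [cross, Pi.smul_apply, smul_eq_mul]
  ring

lemma continuous_cross_left (u : Fin 2 → ℝ) : Continuous (cross u) := by
  unfold cross
  fun_prop

lemma continuous_cross_right (u : Fin 2 → ℝ) : Continuous (cross · u) := by
  unfold cross
  fun_prop

lemma exists_eq_smul_dir {p : Fin 2 → ℝ} (hp : p ≠ 0) (a : ℝ) :
    ∃ r : ℝ, 0 < r ∧ ∃ θ ∈ Ico a (a + 2 * π), p = r • dir θ := by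
  set z : ℂ := ⟨p 0, p 1⟩
  have hz : z ≠ 0 := fun hz => hp <| by
    ext i
    fin_cases i
    exacts [congrArg Complex.re hz, congrArg Complex.im hz]
  obtain ⟨θ, hθ, hdir⟩ := periodic_dir.exists_mem_Ico two_pi_pos (Complex.arg z) a
  refine ⟨‖z‖, norm_pos_iff.2 hz, θ, hθ, ?_⟩
  rw [← hdir]
  ext i
  fin_cases i
  · simp [dir, Complex.norm_mul_cos_arg, z]
  · simp [dir, Complex.norm_mul_sin_arg, z]

def sector (a b : ℝ) : Set (Fin 2 → ℝ) := {p | 0 < cross (dir a) p ∧ 0 < cross p (dir b)}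

lemma isOpen_sector (a b : ℝ) : IsOpen (sector a b) :=
  (isOpen_lt continuous_const (continuous_cross_left _)).inter
    (isOpen_lt continuous_const (continuous_cross_right _))

lemma closure_sector_subset (a b : ℝ) :
    closure (sector a b) ⊆ {p | 0 ≤ cross (dir a) p ∧ 0 ≤ cross p (dir b)} :=
  closure_minimal (fun _ hp => ⟨hp.1.le, hp.2.le⟩)
    ((isClosed_le continuous_const (continuous_cross_left _)).inter
      (isClosed_le continuous_const (continuous_cross_right _)))

lemma smul_dir_mem_sector {a b r θ : ℝ} (hab : b - a ≤ π) (hr : 0 < r) (hθ : θ ∈ Ioo a b) :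
    r • dir θ ∈ sector a b := by
  simp only [sector, mem_ofPred_eq, cross_smul_left, cross_smul_right, cross_dir_dir]
  exact ⟨mul_pos hr (sin_pos_of_pos_of_lt_pi (by linarith [hθ.1]) (by linarith [hθ.2])),
    mul_pos hr (sin_pos_of_pos_of_lt_pi (by linarith [hθ.2]) (by linarith [hθ.1]))⟩

lemma exists_smul_dir_of_mem_closure_sector {a b : ℝ} (hab : a < b)
    {p : Fin 2 → ℝ} (hp : p ≠ 0) (hpab : p ∈ closure (sector a b)) :
    ∃ r : ℝ, 0 < r ∧ ∃ θ ∈ Icc a b, p = r • dir θ := by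
  obtain ⟨r, hr, θ, hθ, rfl⟩ := exists_eq_smul_dir hp a
  obtain ⟨ha, hb⟩ := closure_sector_subset a b hpab
  simp only [cross_smul_left, cross_smul_right, cross_dir_dir] at ha hb
  have hθa : θ - a ≤ π := by
    by_contra! h
    have := sin_neg_of_neg_of_neg_pi_lt (x := θ - a - 2 * π) (by linarith [hθ.2]) (by linarith)
    rw [sin_sub_two_pi] at this
    nlinarith
  have hθb : θ ≤ b := by
    by_contra! h
    have := sin_neg_of_neg_of_neg_pi_lt (x := b - θ) (by linarith) (by linarith)
    nlinarith
  exact ⟨r, hr, θ, ⟨hθ.1, hθb⟩, rfl⟩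

end Sector

section Component

variable {h : (Fin 2 → ℝ) → ℝ} {τ : ℕ}

lemma isOpen_hypAngles (hsm : ContDiff ℝ 2 h) : IsOpen (hypAngles h) :=
  (isOpen_lt continuous_const (hsm.continuous.comp continuous_dir)).inter
    (isOpen_lt ((continuous_hessDet2 hsm).comp continuous_dir) continuous_const)

lemma not_Icc_subset_hypAngles (hsm : ContDiff ℝ 2 h) (hh : IsPosHomogeneous h τ) (hτ : 2 ≤ τ)
    (c : ℝ) : ¬ Icc c (c + π) ⊆ hypAngles h := by
  intro hsub
  have hroot_pos (x) (hx : x ∈ Icc c (c + π)) : 0 < angularRoot τ h x :=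
    rpow_pos_of_pos (hsub hx).1 _
  have := add_neg_of_deriv2_add_neg (fun x hx => hasDerivAt_angularRoot hsm (hsub hx).1)
    (fun x hx => hasDerivAt_angularRoot' hsm hh (hsub hx).1)
    (fun x hx => angularRoot''_add_neg hsm hh hτ (hsub (Ioo_subset_Icc_self hx)))
  linarith [hroot_pos c (left_mem_Icc.2 (by linarith [pi_pos])),
    hroot_pos (c + π) (right_mem_Icc.2 (by linarith [pi_pos]))]

lemma exists_connectedComponentIn_hypAngles_eq_Ioo (hsm : ContDiff ℝ 2 h)
    (hh : IsPosHomogeneous h τ) (hτ : 2 ≤ τ) (h0 : (0 : ℝ) ∈ hypAngles h) :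
    ∃ a b, connectedComponentIn (hypAngles h) 0 = Ioo a b ∧ b - a ≤ π :=
  exists_eq_Ioo_of_forall_not_Icc_subset (isOpen_hypAngles hsm).connectedComponentIn
    isPreconnected_connectedComponentIn (mem_connectedComponentIn h0) fun c hc =>
      not_Icc_subset_hypAngles hsm hh hτ c (hc.trans (connectedComponentIn_subset _ _))

lemma fderiv_dir_single_zero_pos (hsm : ContDiff ℝ 2 h) (hh : IsPosHomogeneous h τ)
    (hτ : 2 ≤ τ) {θ : ℝ} (hθ : θ ∈ Ioo (-π) π) (hsub : uIcc 0 θ ⊆ hypAngles h) :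
    0 < fderiv ℝ h (dir θ) (Pi.single 0 1) := by
  have hroot := le_mul_cos_sub_mul_sin hθ (fun x hx => hasDerivAt_angularRoot hsm (hsub hx).1)
    (fun x hx => hasDerivAt_angularRoot' hsm hh (hsub hx).1)
    (fun x hx => (angularRoot''_add_neg hsm hh hτ (hsub hx)).le)
  have hθpos := (hsub right_mem_uIcc).1
  rw [angularRoot_mul_cos_sub hh (hsm.differentiable two_ne_zero) (by omega) hθpos] at hroot
  have hroot0 : 0 < angularRoot τ h 0 := rpow_pos_of_pos (hsub left_mem_uIcc).1 _
  exact (mul_pos_iff_of_pos_left (by positivity)).1 (hroot0.trans_le hroot)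

lemma mem_hypAngles_of_smul_dir (hsm : ContDiff ℝ 2 h) (hh : IsPosHomogeneous h τ)
    (hτ : 2 ≤ τ) {r θ : ℝ} (hr : 0 < r)
    (hp : r • dir θ ∈ {p | h p = 1 ∧ hessDet2 h p < 0}) : θ ∈ hypAngles h := by
  obtain ⟨hp1, hp2⟩ := hp
  rw [hh hr] at hp1
  rw [hh.hessDet2 hsm hτ hr] at hp2
  exact ⟨pos_of_mul_pos_right (hp1 ▸ one_pos) (by positivity),
    neg_of_mul_neg_right hp2 (by positivity)⟩

lemma connectedComponentIn_subset_smul_dir (hsm : ContDiff ℝ 2 h) (hh : IsPosHomogeneous h τ)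
    (hτ : 2 ≤ τ) {a b : ℝ} (hA : connectedComponentIn (hypAngles h) 0 = Ioo a b)
    (hab : b - a ≤ π) (he0 : ![1, 0] ∈ {p | h p = 1 ∧ hessDet2 h p < 0}) :
    connectedComponentIn {p | h p = 1 ∧ hessDet2 h p < 0} ![1, 0] ⊆
      {p | ∃ r : ℝ, 0 < r ∧ ∃ θ ∈ Ioo a b, p = r • dir θ} := by
  set S := {p : Fin 2 → ℝ | h p = 1 ∧ hessDet2 h p < 0}
  have hdir0 : dir 0 = ![1, 0] := by simp [dir]
  have h0 : (0 : ℝ) ∈ hypAngles h :=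
    mem_hypAngles_of_smul_dir hsm hh hτ one_pos (by rwa [one_smul, hdir0])
  have h0ab : (0 : ℝ) ∈ Ioo a b := hA ▸ mem_connectedComponentIn h0
  obtain ⟨ha, hb⟩ := notMem_of_connectedComponentIn_eq_Ioo h0 hA
  have hcone (p) (hpS : p ∈ S) (hpK : p ∈ closure (sector a b)) :
      ∃ r : ℝ, 0 < r ∧ ∃ θ ∈ Ioo a b, p = r • dir θ := by
    have hp0 : p ≠ 0 := by
      rintro rfl
      simpa [hh.map_zero (by omega)] using hpS.1
    obtain ⟨r, hr, θ, hθ, rfl⟩ :=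
      exists_smul_dir_of_mem_closure_sector (h0ab.1.trans h0ab.2) hp0 hpK
    have hθD := mem_hypAngles_of_smul_dir hsm hh hτ hr hpS
    refine ⟨r, hr, θ, ⟨hθ.1.lt_of_ne ?_, hθ.2.lt_of_ne ?_⟩, rfl⟩ <;> rintro rfl
    exacts [ha hθD, hb hθD]
  have hsub : connectedComponentIn S ![1, 0] ⊆ sector a b := by
    refine isPreconnected_connectedComponentIn.subset_of_closure_inter_subset
      (isOpen_sector a b) ⟨![1, 0], mem_connectedComponentIn he0, ?_⟩ ?_
    · simpa [hdir0] using smul_dir_mem_sector hab one_pos h0ab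
    · rintro p ⟨hpK, hp⟩
      obtain ⟨r, hr, θ, hθ, rfl⟩ := hcone p (connectedComponentIn_subset _ _ hp) hpK
      exact smul_dir_mem_sector hab hr hθ
  exact fun p hp => hcone p (connectedComponentIn_subset _ _ hp) (subset_closure (hsub hp))

theorem fderiv_single_zero_pos_of_mem_connectedComponentIn (hsm : ContDiff ℝ 2 h)
    (hh : IsPosHomogeneous h τ) (hτ : 2 ≤ τ) {p : Fin 2 → ℝ}
    (hp : p ∈ connectedComponentIn {p | h p = 1 ∧ hessDet2 h p < 0} ![1, 0]) :
    0 < fderiv ℝ h p (Pi.single 0 1) := by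
  have he0 := connectedComponentIn_nonempty_iff.1 ⟨p, hp⟩
  have h0 : (0 : ℝ) ∈ hypAngles h :=
    mem_hypAngles_of_smul_dir hsm hh hτ one_pos (by simpa [dir] using he0)
  obtain ⟨a, b, hA, hab⟩ := exists_connectedComponentIn_hypAngles_eq_Ioo hsm hh hτ h0
  obtain ⟨r, hr, θ, hθ, rfl⟩ := connectedComponentIn_subset_smul_dir hsm hh hτ hA hab he0 hp
  have h0ab : (0 : ℝ) ∈ Ioo a b := hA ▸ mem_connectedComponentIn h0
  have hθ' : θ ∈ Ioo (-π) π := ⟨by linarith [hθ.1, h0ab.2], by linarith [hθ.2, h0ab.1]⟩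
  have hsub : uIcc 0 θ ⊆ hypAngles h :=
    (ordConnected_Ioo.uIcc_subset h0ab hθ).trans (hA ▸ connectedComponentIn_subset _ _)
  have hscale : fderiv ℝ h (r • dir θ) (Pi.single 0 1) =
      r ^ (τ - 1) * fderiv ℝ h (dir θ) (Pi.single 0 1) :=
    hh.fderiv_apply (hsm.differentiable two_ne_zero) (by omega) _ hr _
  rw [hscale]
  exact mul_pos (pow_pos hr _) (fderiv_dir_single_zero_pos hsm hh hτ hθ' hsub)

end Component

lemma isPosHomogeneous_model {τ : ℕ} (hτ : 2 ≤ τ) (c : ℕ → ℝ) :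
    IsPosHomogeneous (fun v : Fin 2 → ℝ => v 0 ^ τ - v 0 ^ (τ - 2) * v 1 ^ 2 +
      ∑ k ∈ Finset.Icc 3 τ, c k * v 0 ^ (τ - k) * v 1 ^ k) τ := by
  intro l _ v
  have hmon (k : ℕ) (hk : k ≤ τ) :
      (l • v) 0 ^ (τ - k) * (l • v) 1 ^ k = l ^ τ * (v 0 ^ (τ - k) * v 1 ^ k) := by
    rw [Pi.smul_apply, Pi.smul_apply, smul_eq_mul, smul_eq_mul, mul_pow, mul_pow,
      ← Nat.sub_add_cancel hk, pow_add, Nat.sub_add_cancel hk]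
    ring
  have h0 := hmon 0 (Nat.zero_le τ)
  simp only [Nat.sub_zero, pow_zero, mul_one] at h0
  have hsum : ∑ k ∈ Finset.Icc 3 τ, c k * (l • v) 0 ^ (τ - k) * (l • v) 1 ^ k =
      l ^ τ * ∑ k ∈ Finset.Icc 3 τ, c k * v 0 ^ (τ - k) * v 1 ^ k := by
    rw [Finset.mul_sum]
    refine Finset.sum_congr rfl fun k hk => ?_
    rw [mul_assoc, hmon k (Finset.mem_Icc.1 hk).2]
    ring
  dsimp only
  rw [h0, hmon 2 hτ, hsum]
  ring

end HyperbolicComponent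

open HyperbolicComponent in
/-- **Nonvanishing of `∂h/∂x` on the cone (Lemma 2.17).**
For `h(x,y) = x^τ − x^{τ−2}y² + Σ_{k=3}^{τ} c_k x^{τ−k} y^k` and `H` the connected
component containing `(1,0)` of the hyperbolic points on `{h = 1}`, the partial derivative
`∂h/∂x` does not vanish at any point of the cone `ℝ_{>0}·H`. -/
theorem partial_x_nonvanishing_on_cone (τ : ℕ) (hτ : 3 ≤ τ) (c : ℕ → ℝ)
    (h : (Fin 2 → ℝ) → ℝ)
    (hdef : h = fun v => v 0 ^ τ - v 0 ^ (τ - 2) * v 1 ^ 2 +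
      ∑ k ∈ Finset.Icc 3 τ, c k * v 0 ^ (τ - k) * v 1 ^ k)
    (H : Set (Fin 2 → ℝ))
    (hH : H = connectedComponentIn {p | h p = 1 ∧ hessDet2 h p < 0} ![1, 0]) :
    ∀ q ∈ {x : Fin 2 → ℝ | ∃ l : ℝ, 0 < l ∧ ∃ p ∈ H, x = l • p},
      fderiv ℝ h q (Pi.single 0 1) ≠ 0 := by
  have hsm : ContDiff ℝ 2 h := by rw [hdef]; fun_prop
  have hh : IsPosHomogeneous h τ := hdef ▸ isPosHomogeneous_model (by omega) c
  rintro q ⟨l, hl, p, hp, rfl⟩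
  have hscale : fderiv ℝ h (l • p) (Pi.single 0 1) =
      l ^ (τ - 1) * fderiv ℝ h p (Pi.single 0 1) :=
    hh.fderiv_apply (hsm.differentiable two_ne_zero) (by omega) _ hl _
  rw [hscale]
  exact (mul_pos (pow_pos hl _)
    (fderiv_single_zero_pos_of_mem_connectedComponentIn hsm hh (by omega) (hH ▸ hp))).ne'
end
end
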